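/- arXiv:1609.03688 — 6 statements merged into one kernel-verified Lean document; each statement's English description precedes it below -/
import Mathlib

section
/- Let N ≥ 2 and let W be the complex vector space of symmetric bilinear maps B : ℂ^N × ℂ^N → ℂ^N such that for every v ∈ ℂ^N the endomorphism w ↦ B(v,w) of ℂ^N has trace zero. With the action of the special linear Lie algebra sl(N,ℂ) given by (x·B)(v,w) = x(B(v,w)) − B(x v, w) − B(v, x w), W is a nonzero irreducible sl(N,ℂ)-module: its only Lie submodules are 0 and W. -/
/-!
Write `c (i, j, k)` for the `e_k`-coordinate of `B (e_i, e_j)`. A diagonal matrix `diag h` acts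
on the coordinate `(i, j, k)` by the weight `h k - h i - h j`, and an elementary matrix `E_ab`
moves coordinates along `a ↔ b`. Given a nonzero invariant subspace, one application of a
suitable `E_ab` yields an element with a nonzero coordinate `(p, p, r)`, `r ≠ p`. That weight
occurs at no other coordinate, and the invariant subspace is stable under multiplication by every
polynomial in the weights, in particular by the indicator of a weight space; so it contains the
basis vector at `(p, p, r)`. Further elementary matrices produce from it the symmetrized basis
vectors at all `(u, v, w)` with `w ∉ {u, v}` and the traceless combinations
`(u, v, u) - ½ (v, v, v)`, and these span `W`.
-/

open Finset
open scoped Matrix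

theorem Subalgebra.indicator_mem {K X : Type*} [Field K] [Finite X]
    (A : Subalgebra K (X → K)) (x : X) :
    {y | ∀ g ∈ A, g y = g x}.indicator 1 ∈ A := by
  classical
  have := Fintype.ofFinite X
  set S := {y | ∀ g ∈ A, g y = g x}
  have hsep (y : X) : ∃ g ∈ A, y ∉ S → g y ≠ g x := by
    by_cases hy : y ∈ S
    · exact ⟨0, A.zero_mem, fun h => absurd hy h⟩
    · simp only [S, Set.mem_ofPred_eq, not_forall] at hy
      obtain ⟨g, hg, hne⟩ := hy
      exact ⟨g, hg, fun _ => hne⟩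
  choose g hgA hg using hsep
  -- the factor `f y` equals `1` on `S` and vanishes at `y`
  let f : X → X → K := fun y => (g y x - g y y)⁻¹ • (g y - algebraMap K _ (g y y))
  have hf : S.indicator 1 = ∏ y ∈ univ.filter (· ∉ S), f y := by
    funext z
    rw [Finset.prod_apply]
    by_cases hz : z ∈ S
    · rw [Set.indicator_of_mem hz, Pi.one_apply]
      refine (prod_eq_one fun y hy => ?_).symm
      have hy : y ∉ S := (mem_filter.mp hy).2
      simp only [f, Pi.smul_apply, Pi.sub_apply, Pi.algebraMap_apply, Algebra.algebraMap_self,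
        RingHom.id_apply, smul_eq_mul, hz (g y) (hgA y)]
      exact inv_mul_cancel₀ (sub_ne_zero.mpr (hg y hy).symm)
    · rw [Set.indicator_of_notMem hz]
      refine (prod_eq_zero (mem_filter.mpr ⟨mem_univ z, hz⟩) ?_).symm
      simp [f]
  rw [hf]
  exact Subalgebra.prod_mem _ fun y _ =>
    A.smul_mem (A.sub_mem (hgA y) (A.algebraMap_mem _)) _

def Submodule.mulStabilizer {K X : Type*} [Field K] (V : Submodule K (X → K)) :
    Subalgebra K (X → K) where
  carrier := {g | ∀ c ∈ V, g * c ∈ V}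
  mul_mem' {g g'} hg hg' c hc := mul_assoc g g' c ▸ hg _ (hg' c hc)
  add_mem' {g g'} hg hg' c hc := add_mul g g' c ▸ V.add_mem (hg c hc) (hg' c hc)
  algebraMap_mem' t c hc := by
    rw [Algebra.algebraMap_eq_smul_one, smul_mul_assoc, one_mul]
    exact V.smul_mem t hc

theorem Submodule.mem_mulStabilizer {K X : Type*} [Field K] {V : Submodule K (X → K)}
    {g : X → K} : g ∈ V.mulStabilizer ↔ ∀ c ∈ V, g * c ∈ V :=
  Iff.rfl

theorem exists_ne_two_mul_ne {K ι : Type*} [Field K] [CharZero K] [Fintype ι] [DecidableEq ι]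
    {x : ι → K} (hsum : ∑ i, x i = 0) (hx : x ≠ 0) (q : ι) : ∃ a ≠ q, x q ≠ 2 * x a := by
  by_contra! h
  have hq : x q = 0 := by
    have h2 : 2 * ∑ i, x i = (Fintype.card ι + 1) * x q := by
      rw [mul_sum, ← add_sum_erase _ _ (mem_univ q),
        sum_congr rfl fun a ha => (h a (ne_of_mem_erase ha)).symm, sum_const,
        card_erase_of_mem (mem_univ q), card_univ, nsmul_eq_mul,
        Nat.cast_sub (Fintype.card_pos_iff.mpr ⟨q⟩)]
      ring
    rw [hsum, mul_zero, eq_comm] at h2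
    exact (mul_eq_zero.mp h2).resolve_left (by norm_cast)
  refine hx (funext fun a => ?_)
  by_cases ha : a = q
  · rw [ha, hq, Pi.zero_apply]
  · simpa [hq] using (h a ha).symm

namespace SymTraceless

variable {K ι : Type*} [Field K]

def weight (h : ι → K) : ι × ι × ι → K := fun t => h t.2.2 - h t.1 - h t.2.1

section DecidableEq

variable [DecidableEq ι]

def elemAct (a b : ι) : (ι × ι × ι → K) →ₗ[K] ι × ι × ι → K where
  toFun c t := (if t.2.2 = a then c (t.1, t.2.1, b) else 0) -
    (if t.1 = b then c (a, t.2.1, t.2.2) else 0) - (if t.2.1 = b then c (t.1, a, t.2.2) else 0)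
  map_add' c d := by funext t; simp only [Pi.add_apply]; split_ifs <;> ring
  map_smul' s c := by
    funext t; simp only [Pi.smul_apply, smul_eq_mul, RingHom.id_apply]; split_ifs <;> ring

def symSingle (p q r : ι) : ι × ι × ι → K := Pi.single (p, q, r) 1 + Pi.single (q, p, r) 1

theorem symSingle_comm (p q r : ι) : (symSingle p q r : ι × ι × ι → K) = symSingle q p r :=
  add_comm _ _

theorem elemAct_single (a b p q r : ι) :
    elemAct a b (Pi.single (p, q, r) (1 : K)) =
      (if b = r then Pi.single (p, q, a) 1 else 0) - (if a = p then Pi.single (b, q, r) 1 else 0) -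
        (if a = q then Pi.single (p, b, r) 1 else 0) := by
  funext ⟨i, j, k⟩
  simp only [elemAct, LinearMap.coe_mk, AddHom.coe_mk, Pi.sub_apply]
  split_ifs <;> simp_all [Pi.single_apply]

theorem elemAct_symSingle (a b p q r : ι) :
    elemAct a b (symSingle p q r : ι × ι × ι → K) =
      (if b = r then symSingle p q a else 0) - (if a = p then symSingle b q r else 0) -
        (if a = q then symSingle p b r else 0) := by
  simp only [symSingle, map_add, elemAct_single]
  split_ifs <;> abel

theorem eq_of_forall_weight_eq [CharZero K] {p r : ι} (hrp : r ≠ p) {t : ι × ι × ι}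
    (h : ∀ g : ι → K, weight g t = weight g (p, p, r)) : t = (p, p, r) := by
  obtain ⟨i, j, k⟩ := t
  have hr := h (Pi.single r 1)
  have hp := h (Pi.single p 1)
  simp only [weight, Pi.single_apply, if_neg hrp, if_neg hrp.symm] at hr hp
  have hk : k = r := by
    by_contra hk
    rw [if_neg hk] at hr
    split_ifs at hr <;> norm_num at hr
  subst hk
  rw [if_neg hrp] at hp
  split_ifs at hp with hi hj <;> norm_num at hp
  rw [hi, hj]

section Generation

variable {V : Submodule K (ι × ι × ι → K)}

theorem mem_of_elemAct_eq_smul (hE : ∀ a b, a ≠ b → ∀ c ∈ V, elemAct a b c ∈ V) {a b : ι}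
    (hab : a ≠ b) {c d : ι × ι × ι → K} (hc : c ∈ V) {s : K} (hs : s ≠ 0)
    (h : elemAct a b c = s • d) : d ∈ V :=
  (V.smul_mem_iff hs).mp (h ▸ hE a b hab c hc)

theorem symSingle_self_mem_of_ne (hE : ∀ a b, a ≠ b → ∀ c ∈ V, elemAct a b c ∈ V) {p r a : ι}
    (hap : a ≠ p) (h : symSingle p p r ∈ V) : symSingle p p a ∈ V := by
  rcases eq_or_ne a r with rfl | har
  · exact h
  refine mem_of_elemAct_eq_smul hE har h one_ne_zero ?_
  simp [elemAct_symSingle, hap]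

-- `elemAct x y` applied three times takes `symSingle x x y` to `6 • symSingle y y x`
theorem symSingle_self_mem_swap [CharZero K] (hE : ∀ a b, a ≠ b → ∀ c ∈ V, elemAct a b c ∈ V)
    {x y : ι} (hxy : x ≠ y) (h : symSingle x x y ∈ V) : symSingle y y x ∈ V := by
  have h₁ : symSingle x x x - (2 : K) • symSingle x y y ∈ V := by
    refine mem_of_elemAct_eq_smul hE hxy h one_ne_zero ?_
    simp [elemAct_symSingle, symSingle_comm y x y]
    module
  have h₂ : -(4 : K) • symSingle x y x + (2 : K) • symSingle y y y ∈ V := by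
    refine mem_of_elemAct_eq_smul hE hxy h₁ one_ne_zero ?_
    simp [elemAct_symSingle, hxy, hxy.symm, symSingle_comm y x x]
    module
  refine mem_of_elemAct_eq_smul hE hxy h₂ (by norm_num : (6 : K) ≠ 0) ?_
  simp [elemAct_symSingle, hxy, hxy.symm]
  module

theorem symSingle_self_mem [CharZero K] (hE : ∀ a b, a ≠ b → ∀ c ∈ V, elemAct a b c ∈ V)
    {p r : ι} (h : symSingle p p r ∈ V) {s t : ι} (hts : t ≠ s) : symSingle s s t ∈ V := by
  rcases eq_or_ne s p with rfl | hsp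
  · exact symSingle_self_mem_of_ne hE hts h
  · exact symSingle_self_mem_of_ne hE hts <|
      symSingle_self_mem_swap hE hsp.symm (symSingle_self_mem_of_ne hE hsp h)

theorem symSingle_mem [CharZero K] (hE : ∀ a b, a ≠ b → ∀ c ∈ V, elemAct a b c ∈ V)
    {u w : ι} (h : symSingle u u w ∈ V) {v : ι} (hwv : w ≠ v) : symSingle u v w ∈ V := by
  rcases eq_or_ne u v with rfl | huv
  · exact h
  refine mem_of_elemAct_eq_smul hE huv h (by norm_num : (-2 : K) ≠ 0) ?_
  simp [elemAct_symSingle, hwv.symm, symSingle_comm v u w]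
  module

theorem symSingle_sub_mem [CharZero K] (hE : ∀ a b, a ≠ b → ∀ c ∈ V, elemAct a b c ∈ V)
    {u v : ι} (huv : u ≠ v) (h : symSingle v v u ∈ V) :
    symSingle u v u - (2 : K)⁻¹ • symSingle v v v ∈ V := by
  refine mem_of_elemAct_eq_smul hE huv.symm h (by norm_num : (-2 : K) ≠ 0) ?_
  simp [elemAct_symSingle, symSingle_comm v u u]
  module

def tracelessSymSingle (p q r : ι) : ι × ι × ι → K :=
  symSingle p q r - (if r = p then (2 : K)⁻¹ • symSingle q q q else 0) -
    (if r = q then (2 : K)⁻¹ • symSingle p p p else 0)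

theorem tracelessSymSingle_mem [CharZero K] (hE : ∀ a b, a ≠ b → ∀ c ∈ V, elemAct a b c ∈ V)
    {p₀ r₀ : ι} (h : symSingle p₀ p₀ r₀ ∈ V) (p q r : ι) : tracelessSymSingle p q r ∈ V := by
  have hsym {u v w : ι} (hwu : w ≠ u) (hwv : w ≠ v) : symSingle u v w ∈ V :=
    symSingle_mem hE (symSingle_self_mem hE h hwu) hwv
  have hsub {u v : ι} (huv : u ≠ v) : symSingle u v u - (2 : K)⁻¹ • symSingle v v v ∈ V :=
    symSingle_sub_mem hE huv (symSingle_self_mem hE h huv)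
  unfold tracelessSymSingle
  by_cases hrp : r = p <;> by_cases hrq : r = q
  · subst hrp hrq
    convert V.zero_mem using 1
    simp only [if_true]
    module
  · subst hrp
    simpa [hrq] using hsub hrq
  · subst hrq
    simpa [hrp, symSingle_comm p r r] using hsub hrp
  · simpa [hrp, hrq] using hsym hrp hrq

end Generation

end DecidableEq

variable [Fintype ι]

def symmTraceless : Submodule K (ι × ι × ι → K) where
  carrier := {c | (∀ i j k, c (i, j, k) = c (j, i, k)) ∧ ∀ i, ∑ k, c (i, k, k) = 0}
  add_mem' {c d} hc hd :=
    ⟨fun i j k => by simp [hc.1 i j k, hd.1 i j k], fun i => by simp [sum_add_distrib, hc.2, hd.2]⟩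
  zero_mem' := ⟨fun _ _ _ => rfl, fun _ => by simp⟩
  smul_mem' s c hc := ⟨fun i j k => by simp [hc.1 i j k], fun i => by simp [← mul_sum, hc.2]⟩

theorem weight_mem_mulStabilizer [CharZero K] [Nonempty ι] {V : Submodule K (ι × ι × ι → K)}
    (hD : ∀ h : ι → K, ∑ i, h i = 0 → ∀ c ∈ V, weight h * c ∈ V) (h : ι → K) :
    weight h ∈ V.mulStabilizer := by
  set s := (∑ i, h i) / Fintype.card ι
  have hs : ∑ i, (h i - s) = 0 := by
    rw [sum_sub_distrib, sum_const, card_univ, nsmul_eq_mul,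
      mul_div_cancel₀ _ (Nat.cast_ne_zero.mpr Fintype.card_ne_zero), sub_self]
  have hshift : weight h = weight (fun i => h i - s) - algebraMap K _ s := by
    funext t
    simp only [weight, Pi.sub_apply, Pi.algebraMap_apply, Algebra.algebraMap_self,
      RingHom.id_apply]
    ring
  rw [hshift]
  exact sub_mem (Submodule.mem_mulStabilizer.mpr (hD _ hs)) (algebraMap_mem _ s)

def slAct (x : Matrix ι ι K) (B : LinearMap.BilinMap K (ι → K) (ι → K)) :
    LinearMap.BilinMap K (ι → K) (ι → K) :=
  B.compr₂ x.mulVecLin - B ∘ₗ x.mulVecLin - B.compl₂ x.mulVecLin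

@[simp]
theorem slAct_apply (x : Matrix ι ι K) (B : LinearMap.BilinMap K (ι → K) (ι → K))
    (v w : ι → K) : slAct x B v w = x *ᵥ B v w - B (x *ᵥ v) w - B v (x *ᵥ w) :=
  rfl

variable [DecidableEq ι]

theorem elemAct_apply_self_of_ne {c : ι × ι × ι → K} (hc : c ∈ symmTraceless) {i j k : ι}
    (hkj : k ≠ j) : elemAct j i c (i, i, k) = -2 * c (i, j, k) := by
  simp [elemAct, hkj, hc.1 j i k]
  ring

theorem elemAct_apply_self_self {c : ι × ι × ι → K} (hc : c ∈ symmTraceless) (a q : ι) :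
    elemAct a q c (q, q, a) = c (q, q, q) - 2 * c (q, a, a) := by
  simp [elemAct, hc.1 a q a]
  ring

theorem exists_apply_self_ne_zero [CharZero K] {V : Submodule K (ι × ι × ι → K)}
    (hE : ∀ a b, a ≠ b → ∀ c ∈ V, elemAct a b c ∈ V) (hVW : V ≤ symmTraceless) (hV : V ≠ ⊥) :
    ∃ c ∈ V, ∃ p r, r ≠ p ∧ c (p, p, r) ≠ 0 := by
  obtain ⟨c, hc, hc0⟩ := V.ne_bot_iff.mp hV
  obtain ⟨⟨i, j, k⟩, hijk⟩ : ∃ t, c t ≠ 0 := by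
    by_contra! h
    exact hc0 (funext h)
  -- tracelessness of `c (q, ·, ·)` rules out `c (q, q, q) = 2 * c (q, a, a)` for all `a ≠ q`
  have diag (q m : ι) (hqm : c (q, m, m) ≠ 0) : ∃ c ∈ V, ∃ p r, r ≠ p ∧ c (p, p, r) ≠ 0 := by
    obtain ⟨a, haq, ha⟩ := exists_ne_two_mul_ne ((hVW hc).2 q) (fun h => hqm (congrFun h m)) q
    exact ⟨_, hE a q haq c hc, q, a, haq, by
      rwa [elemAct_apply_self_self (hVW hc), sub_ne_zero]⟩
  by_cases hki : k = i
  · subst hki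
    exact diag j k (by rwa [(hVW hc).1])
  by_cases hkj : k = j
  · subst hkj
    exact diag i k hijk
  by_cases hij : i = j
  · subst hij
    exact ⟨c, hc, i, k, hki, hijk⟩
  refine ⟨_, hE j i (Ne.symm hij) c hc, i, k, hki, ?_⟩
  rw [elemAct_apply_self_of_ne (hVW hc) hkj]
  exact mul_ne_zero (by norm_num) hijk

theorem single_mem_of_apply_ne_zero [CharZero K] {V : Submodule K (ι × ι × ι → K)}
    (hD : ∀ h : ι → K, ∑ i, h i = 0 → ∀ c ∈ V, weight h * c ∈ V) {c : ι × ι × ι → K}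
    (hc : c ∈ V) {p r : ι} (hrp : r ≠ p) (hc0 : c (p, p, r) ≠ 0) :
    Pi.single (p, p, r) 1 ∈ V := by
  have : Nonempty ι := ⟨p⟩
  set S := {t | ∀ g ∈ V.mulStabilizer, g t = g (p, p, r)}
  have hS : S.indicator 1 * c = c (p, p, r) • Pi.single (p, p, r) 1 := by
    funext t
    by_cases ht : t ∈ S
    · obtain rfl := eq_of_forall_weight_eq hrp fun g => ht _ (weight_mem_mulStabilizer hD g)
      simp [ht]
    · have : t ≠ (p, p, r) := fun h => ht (h ▸ fun _ _ => rfl)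
      simp [ht, this]
  have hproj : S.indicator 1 * c ∈ V :=
    Submodule.mem_mulStabilizer.mp (Subalgebra.indicator_mem _ _) c hc
  rw [hS] at hproj
  exact (V.smul_mem_iff hc0).mp hproj

theorem sum_smul_symSingle {c : ι × ι × ι → K} (hc : ∀ i j k, c (i, j, k) = c (j, i, k)) :
    ∑ t, c t • symSingle t.1 t.2.1 t.2.2 = (2 : K) • c := by
  let σ : Equiv.Perm (ι × ι × ι) :=
    Function.Involutive.toPerm (fun t => (t.2.1, t.1, t.2.2)) fun _ => rfl
  have hσ : ∑ t, c t • Pi.single (σ t) (1 : K) = c := by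
    conv_rhs => rw [pi_eq_sum_univ' c, ← Equiv.sum_comp σ]
    exact sum_congr rfl fun ⟨i, j, k⟩ _ => by rw [show σ (i, j, k) = (j, i, k) from rfl, hc i j k]
  simp only [symSingle, smul_add, sum_add_distrib]
  rw [← pi_eq_sum_univ' c]
  exact (congrArg _ hσ).trans (two_smul K c).symm

theorem sum_smul_tracelessSymSingle {c : ι × ι × ι → K} (hc : c ∈ symmTraceless) :
    ∑ t, c t • tracelessSymSingle t.1 t.2.1 t.2.2 = (2 : K) • c := by
  have h₁ : ∑ t : ι × ι × ι, c t • (if t.2.2 = t.1 then (2 : K)⁻¹ • symSingle t.2.1 t.2.1 t.2.1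
      else 0) = (0 : ι × ι × ι → K) := by
    simp only [Fintype.sum_prod_type, smul_ite, smul_zero, sum_ite_eq', mem_univ, if_true]
    rw [sum_comm]
    refine sum_eq_zero fun q _ => ?_
    rw [← sum_smul, sum_congr rfl fun p _ => hc.1 p q p, hc.2 q, zero_smul]
  have h₂ : ∑ t : ι × ι × ι, c t • (if t.2.2 = t.2.1 then (2 : K)⁻¹ • symSingle t.1 t.1 t.1
      else 0) = (0 : ι × ι × ι → K) := by
    simp only [Fintype.sum_prod_type, smul_ite, smul_zero, sum_ite_eq', mem_univ, if_true]
    refine sum_eq_zero fun p _ => ?_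
    rw [← sum_smul, hc.2 p, zero_smul]
  simp only [tracelessSymSingle, smul_sub, sum_sub_distrib, h₁, h₂, sub_zero]
  exact sum_smul_symSingle hc.1

theorem symmTraceless_le_of_ne_bot [CharZero K] {V : Submodule K (ι × ι × ι → K)}
    (hE : ∀ a b, a ≠ b → ∀ c ∈ V, elemAct a b c ∈ V)
    (hD : ∀ h : ι → K, ∑ i, h i = 0 → ∀ c ∈ V, weight h * c ∈ V)
    (hVW : V ≤ symmTraceless) (hV : V ≠ ⊥) : symmTraceless ≤ V := by
  obtain ⟨c, hc, p, r, hrp, hc0⟩ := exists_apply_self_ne_zero hE hVW hV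
  have hP : symSingle p p r ∈ V := by
    rw [symSingle, ← two_smul K]
    exact V.smul_mem 2 (single_mem_of_apply_ne_zero hD hc hrp hc0)
  intro d hd
  rw [← V.smul_mem_iff (two_ne_zero : (2 : K) ≠ 0), ← sum_smul_tracelessSymSingle hd]
  exact sum_mem fun t _ => V.smul_mem _ (tracelessSymSingle_mem hE hP _ _ _)

variable (K ι) in
def coordEquiv : LinearMap.BilinMap K (ι → K) (ι → K) ≃ₗ[K] (ι × ι × ι → K) :=
  (LinearEquiv.piRing K _ ι K).trans <|
    (LinearEquiv.piCongrRight fun _ => LinearEquiv.piRing K (ι → K) ι K).trans <|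
      (LinearEquiv.piCongrRight fun _ => (LinearEquiv.curry K K ι ι).symm).trans
        (LinearEquiv.curry K K ι (ι × ι)).symm

@[simp]
theorem coordEquiv_apply (B : LinearMap.BilinMap K (ι → K) (ι → K)) (i j k : ι) :
    coordEquiv K ι B (i, j, k) = B (Pi.single i 1) (Pi.single j 1) k :=
  rfl

theorem coordEquiv_slAct_single (a b : ι) (B : LinearMap.BilinMap K (ι → K) (ι → K)) :
    coordEquiv K ι (slAct (Matrix.single a b 1) B) = elemAct a b (coordEquiv K ι B) := by
  funext ⟨i, j, k⟩
  simp only [coordEquiv_apply, slAct_apply, Matrix.single_mulVec_eq, map_smul,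
    LinearMap.smul_apply, Pi.sub_apply, Pi.smul_apply, smul_eq_mul, one_mul]
  simp [elemAct, Pi.single_apply, eq_comm (a := b)]

theorem coordEquiv_slAct_diagonal (h : ι → K) (B : LinearMap.BilinMap K (ι → K) (ι → K)) :
    coordEquiv K ι (slAct (Matrix.diagonal h) B) = weight h * coordEquiv K ι B := by
  have hdiag (i : ι) : Matrix.diagonal h *ᵥ Pi.single i 1 = h i • Pi.single i 1 := by
    rw [Matrix.diagonal_mulVec_single, mul_one, ← Pi.single_smul', smul_eq_mul, mul_one]
  funext ⟨i, j, k⟩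
  simp only [coordEquiv_apply, slAct_apply, hdiag, map_smul, LinearMap.smul_apply, Pi.sub_apply,
    Pi.smul_apply, Matrix.mulVec_diagonal, smul_eq_mul, weight, Pi.mul_apply]
  ring

theorem trace_eq_sum_apply_single (f : (ι → K) →ₗ[K] ι → K) :
    LinearMap.trace K (ι → K) f = ∑ k, f (Pi.single k 1) k := by
  rw [← Matrix.toLin'_toMatrix' f, Matrix.trace_toLin'_eq]
  simp [Matrix.trace, LinearMap.toMatrix'_apply]

theorem coordEquiv_mem_symmTraceless {B : LinearMap.BilinMap K (ι → K) (ι → K)}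
    (hsym : ∀ v w, B v w = B w v) (htr : ∀ v, LinearMap.trace K (ι → K) (B v) = 0) :
    coordEquiv K ι B ∈ symmTraceless :=
  ⟨fun i j _ => by rw [coordEquiv_apply, coordEquiv_apply, hsym], fun i => by
    simpa [trace_eq_sum_apply_single] using htr (Pi.single i 1)⟩

theorem exists_symm_traceless_ne_zero [Nontrivial ι] :
    ∃ B : LinearMap.BilinMap K (ι → K) (ι → K), (∀ v w, B v w = B w v) ∧
      (∀ v, LinearMap.trace K (ι → K) (B v) = 0) ∧ B ≠ 0 := by
  obtain ⟨z, o, hzo⟩ := exists_pair_ne ι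
  let B : LinearMap.BilinMap K (ι → K) (ι → K) :=
    ((LinearMap.mul K K).compl₁₂ (LinearMap.proj z) (LinearMap.proj z)).compr₂
      (LinearMap.toSpanSingleton K _ (Pi.single o 1))
  have hB (v w : ι → K) : B v w = (v z * w z) • Pi.single o 1 := rfl
  refine ⟨B, fun v w => by rw [hB, hB, mul_comm], fun v => ?_, fun h => ?_⟩
  · simp [trace_eq_sum_apply_single, hB, Pi.single_apply, hzo]
  · simpa [hB] using congrFun (LinearMap.congr_fun₂ h (Pi.single z 1) (Pi.single z 1)) o

end SymTraceless

open SymTraceless in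
/-- For `N ≥ 2`, the space `W` of symmetric bilinear maps
`B : ℂ^N × ℂ^N → ℂ^N` all of whose partial evaluations `w ↦ B(v,w)` are traceless
endomorphisms is a nonzero irreducible module over `sl(N,ℂ)` (the trace-zero `N × N`
complex matrices), for the action `(x·B)(v,w) = x(B(v,w)) − B(xv,w) − B(v,xw)`:
its only Lie submodules are `0` and `W`. -/
theorem sl_irreducible_sym2_traceless (N : ℕ) (hN : 2 ≤ N)
    (W : Set ((Fin N → ℂ) →ₗ[ℂ] (Fin N → ℂ) →ₗ[ℂ] (Fin N → ℂ)))
    (hW : W = {B | (∀ v w, B v w = B w v) ∧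
      ∀ v, LinearMap.trace ℂ (Fin N → ℂ) (B v) = 0})
    (act : Matrix (Fin N) (Fin N) ℂ →
      ((Fin N → ℂ) →ₗ[ℂ] (Fin N → ℂ) →ₗ[ℂ] (Fin N → ℂ)) →
      ((Fin N → ℂ) →ₗ[ℂ] (Fin N → ℂ) →ₗ[ℂ] (Fin N → ℂ)))
    (hact : ∀ x B v w,
      act x B v w = x.mulVec (B v w) - B (x.mulVec v) w - B v (x.mulVec w)) :
    (∃ B ∈ W, B ≠ 0) ∧
      ∀ U : Submodule ℂ ((Fin N → ℂ) →ₗ[ℂ] (Fin N → ℂ) →ₗ[ℂ] (Fin N → ℂ)),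
        (U : Set _) ⊆ W →
        (∀ B ∈ U, ∀ x : Matrix (Fin N) (Fin N) ℂ, x.trace = 0 → act x B ∈ U) →
        U = ⊥ ∨ (U : Set _) = W := by
  subst hW
  have hslAct (x B) : act x B = slAct x B := LinearMap.ext₂ (hact x B)
  have : Nontrivial (Fin N) := Fin.nontrivial_iff_two_le.mpr hN
  refine ⟨?_, fun U hUW hU => or_iff_not_imp_left.mpr fun hU0 => ?_⟩
  · obtain ⟨B, hsym, htr, hB⟩ := exists_symm_traceless_ne_zero (K := ℂ) (ι := Fin N)
    exact ⟨B, ⟨hsym, htr⟩, hB⟩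
  set V := U.map (coordEquiv ℂ (Fin N)).toLinearMap
  have hE : ∀ a b, a ≠ b → ∀ c ∈ V, elemAct a b c ∈ V := by
    rintro a b hab _ ⟨B, hB, rfl⟩
    rw [LinearEquiv.coe_coe, ← coordEquiv_slAct_single, ← hslAct]
    exact Submodule.mem_map_of_mem (hU B hB _ (Matrix.trace_single_eq_of_ne a b 1 hab))
  have hD : ∀ h : Fin N → ℂ, ∑ i, h i = 0 → ∀ c ∈ V, weight h * c ∈ V := by
    rintro h hh _ ⟨B, hB, rfl⟩
    rw [LinearEquiv.coe_coe, ← coordEquiv_slAct_diagonal, ← hslAct]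
    exact Submodule.mem_map_of_mem (hU B hB _ (by rwa [Matrix.trace_diagonal]))
  have hVW : V ≤ symmTraceless := by
    rintro _ ⟨B, hB, rfl⟩
    exact coordEquiv_mem_symmTraceless (hUW hB).1 (hUW hB).2
  have hV : V ≠ ⊥ := by simpa [V] using hU0
  refine Set.Subset.antisymm hUW fun B hB => ?_
  have := symmTraceless_le_of_ne_bot hE hD hVW hV (coordEquiv_mem_symmTraceless hB.1 hB.2)
  simpa [V, Submodule.mem_map_equiv] using this
end

section
/- Let N ≥ 1 and let ω be the standard symplectic form on ℂ^{2N}. Let W be the complex vector space of symmetric bilinear maps B : ℂ^{2N} × ℂ^{2N} → ℂ^{2N} such that for every v ∈ ℂ^{2N} the endomorphism w ↦ B(v,w) lies in sp(2N,ℂ), i.e. ω(B(v,w),u) + ω(w,B(v,u)) = 0 for all w,u. With the action of sp(2N,ℂ) given by (x·B)(v,w) = x(B(v,w)) − B(x v, w) − B(v, x w), W is a nonzero irreducible sp(2N,ℂ)-module: its only Lie submodules are 0 and W. -/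
/-!
Lowering the last index with `ω` identifies `W` with the symmetric cubic tensors
`t k l m = ω (B eₖ eₗ) eₘ`, on which the matrices `E_pq - ε_p ε_q E_{q̄p̄}` of `sp(2N)` act by
derivations (`p̄` is the index paired with `p` by `ω`, and `ε_p = ω (e_p, e_p̄) = ±1`). Grade tensors by the Cartan element with weights `(2, 1, …, 1)`: a nonzero invariant
subspace `P` contains an eigenvector of it, and a nonzero homogeneous element of `P` of maximal
degree is killed by every raising operator, which forces it to be a multiple of the highest weight
vector `e_z³`. Lowering three times, `P` also contains `e_z̄³`. If `P` were proper, the orthogonal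
of `P` inside the symmetric tensors for the invariant pairing
`⟨s, t⟩ = ∑ ε_k ε_l ε_m s_{klm} t_{k̄l̄m̄}` would be a nonzero invariant subspace, so it would
contain `e_z³`; but `⟨e_z̄³, e_z³⟩ ≠ 0`.
-/

open Finset Sum
open scoped Matrix

lemma Module.End.exists_eigenvector_mem {K M : Type*} [Field K] [IsAlgClosed K] [AddCommGroup M]
    [Module K M] [FiniteDimensional K M] (f : Module.End K M) {P : Submodule K M}
    (hP : ∀ v ∈ P, f v ∈ P) (hne : P ≠ ⊥) : ∃ v ∈ P, v ≠ 0 ∧ ∃ μ : K, f v = μ • v := by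
  have : Nontrivial P := Submodule.nontrivial_iff_ne_bot.mpr hne
  obtain ⟨μ, hμ⟩ := Module.End.exists_eigenvalue (f.restrict hP)
  obtain ⟨v, hv⟩ := hμ.exists_hasEigenvector
  exact ⟨v, v.2, by simpa using hv.2, μ, by simpa using congrArg Subtype.val hv.apply_eq_smul⟩

lemma LinearMap.BilinForm.inf_orthogonal_ne_bot {K M : Type*} [Field K] [AddCommGroup M]
    [Module K M] [FiniteDimensional K M] (B : LinearMap.BilinForm K M) {P S : Submodule K M}
    (h : P < S) : S ⊓ B.orthogonal P ≠ ⊥ := by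
  intro hbot
  have h₁ := LinearMap.BilinForm.finrank_add_finrank_orthogonal' (B := B) P
  have h₂ := Submodule.finrank_sup_add_finrank_inf_eq S (B.orthogonal P)
  have h₃ := Submodule.finrank_le (S ⊔ B.orthogonal P)
  have h₄ := Submodule.finrank_lt_finrank_of_lt h
  rw [hbot, finrank_bot] at h₂
  omega

namespace SpSym3

variable {ι : Type*}

local notation "V" => ι ⊕ ι → ℂ

def sign : ι ⊕ ι → ℂ := Sum.elim 1 (-1)

@[simp] lemma sign_inl (i : ι) : sign (inl i : ι ⊕ ι) = 1 := rfl
@[simp] lemma sign_inr (i : ι) : sign (inr i : ι ⊕ ι) = -1 := rfl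
@[simp] lemma sign_swap (p : ι ⊕ ι) : sign p.swap = -sign p := by cases p <;> simp
@[simp] lemma sign_mul_self (p : ι ⊕ ι) : sign p * sign p = 1 := by cases p <;> simp
lemma sign_ne_zero (p : ι ⊕ ι) : sign p ≠ 0 := by cases p <;> simp

lemma swap_eq_iff {p q : ι ⊕ ι} : p.swap = q ↔ p = q.swap :=
  Function.Involutive.eq_iff Sum.swap_swap

abbrev Tensor (ι : Type*) := ι ⊕ ι → ι ⊕ ι → ι ⊕ ι → ℂ

def symTensors : Submodule ℂ (Tensor ι) where
  carrier := {t | (∀ k l m, t k l m = t l k m) ∧ ∀ k l m, t k l m = t k m l}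
  add_mem' hs ht := ⟨fun k l m => by simp [hs.1 k l m, ht.1 k l m],
    fun k l m => by simp [hs.2 k l m, ht.2 k l m]⟩
  zero_mem' := ⟨fun _ _ _ => rfl, fun _ _ _ => rfl⟩
  smul_mem' a _ ht := ⟨fun k l m => by simp [ht.1 k l m], fun k l m => by simp [ht.2 k l m]⟩

lemma symTensors.apply_comm₁₃ {t : Tensor ι} (ht : t ∈ symTensors) (k l m : ι ⊕ ι) :
    t k l m = t m l k := by
  rw [ht.2, ht.1, ht.2]

def grade (c : ι → ℤ) : ι ⊕ ι → ℤ := Sum.elim c (-c)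

@[simp] lemma grade_inl (c : ι → ℤ) (i : ι) : grade c (inl i) = c i := rfl
@[simp] lemma grade_inr (c : ι → ℤ) (i : ι) : grade c (inr i) = -c i := rfl
lemma grade_swap (c : ι → ℤ) (p : ι ⊕ ι) : grade c p.swap = -grade c p := by cases p <;> simp

def homogeneous (c : ι → ℤ) (n : ℤ) : Submodule ℂ (Tensor ι) where
  carrier := {t | ∀ k l m, grade c k + grade c l + grade c m ≠ n → t k l m = 0}
  add_mem' hs ht k l m h := by simp [hs k l m h, ht k l m h]
  zero_mem' _ _ _ _ := rfl
  smul_mem' a _ ht k l m h := by simp [ht k l m h]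

lemma exists_grade_eq_of_mem_homogeneous {c : ι → ℤ} {n : ℤ} {t : Tensor ι}
    (ht : t ∈ homogeneous c n) (h0 : t ≠ 0) : ∃ k l m, grade c k + grade c l + grade c m = n := by
  by_contra! h
  exact h0 (funext₃ fun k l m => ht k l m (h k l m))

section

variable [DecidableEq ι] {t : Tensor ι}

-- `-der p q` is the action of the matrix unit `E_pq` on trilinear forms.
def der (p q : ι ⊕ ι) : Module.End ℂ (Tensor ι) where
  toFun t k l m :=
    (if k = q then t p l m else 0) + (if l = q then t k p m else 0) + (if m = q then t k l p else 0)
  map_add' s t := by ext k l m; simp only [Pi.add_apply]; split_ifs <;> ring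
  map_smul' a t := by
    ext k l m; simp only [Pi.smul_apply, smul_eq_mul, RingHom.id_apply]; split_ifs <;> ring

lemma der_apply (p q : ι ⊕ ι) (t : Tensor ι) (k l m : ι ⊕ ι) :
    der p q t k l m =
      (if k = q then t p l m else 0) + (if l = q then t k p m else 0) +
        (if m = q then t k l p else 0) :=
  rfl

lemma der_self_apply (p : ι ⊕ ι) (t : Tensor ι) (k l m : ι ⊕ ι) : der p p t k l m =
    ((if k = p then 1 else 0) + (if l = p then 1 else 0) + (if m = p then 1 else 0)) * t k l m := by
  simp only [der_apply]
  split_ifs <;> subst_vars <;> ring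

lemma der_mem_symTensors (p q : ι ⊕ ι) (ht : t ∈ symTensors) : der p q t ∈ symTensors := by
  constructor <;> intro k l m <;> simp only [der_apply]
  · rw [ht.1 p l m, ht.1 k p m, ht.1 k l p]; ring
  · rw [ht.2 p l m, ht.2 k p m, ht.2 k l p]; ring

lemma der_mem_homogeneous (p q : ι ⊕ ι) {c : ι → ℤ} {n : ℤ} (ht : t ∈ homogeneous c n) :
    der p q t ∈ homogeneous c (n + grade c q - grade c p) := by
  intro k l m h
  have h₁ : k = q → t p l m = 0 := fun hk => ht p l m (by subst hk; omega)
  have h₂ : l = q → t k p m = 0 := fun hl => ht k p m (by subst hl; omega)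
  have h₃ : m = q → t k l p = 0 := fun hm => ht k l p (by subst hm; omega)
  simp only [der_apply, ite_eq_right_iff.mpr h₁, ite_eq_right_iff.mpr h₂, ite_eq_right_iff.mpr h₃,
    add_zero]

lemma symTensors.apply_eq_zero_of_der_eq_zero (ht : t ∈ symTensors) {w u : ι ⊕ ι}
    (h : der w u t = 0) (l m : ι ⊕ ι) : t w l m = 0 := by
  have h₀ := congr_fun₃ h u l m
  simp only [der_apply, if_true, Pi.zero_apply] at h₀
  by_cases hl : l = u <;> by_cases hm : m = u
  · subst hl hm
    simp only [if_true, ← ht.1 w, ← symTensors.apply_comm₁₃ ht w] at h₀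
    linear_combination h₀ / 3
  · subst hl
    simp only [if_true, if_neg hm, ← ht.1 w] at h₀
    linear_combination h₀ / 2
  · subst hm
    simp only [if_true, if_neg hl, ← symTensors.apply_comm₁₃ ht w] at h₀
    linear_combination h₀ / 2
  · simpa [hl, hm] using h₀

lemma symTensors.der_eq_zero (ht : t ∈ symTensors) {p : ι ⊕ ι} (h : ∀ l m, t p l m = 0)
    (q : ι ⊕ ι) : der p q t = 0 := by
  ext k l m
  simp [der_apply, h, ht.1 k p, ← symTensors.apply_comm₁₃ ht p]

def symDer (p q : ι ⊕ ι) : Module.End ℂ (Tensor ι) :=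
  der p q - (sign p * sign q) • der q.swap p.swap

lemma symDer_swap (p : ι ⊕ ι) : symDer p p.swap = (2 : ℂ) • der p p.swap := by
  rw [symDer, Sum.swap_swap, sign_swap, mul_neg, sign_mul_self]
  module

lemma symDer_mem_symTensors (p q : ι ⊕ ι) (ht : t ∈ symTensors) : symDer p q t ∈ symTensors :=
  sub_mem (der_mem_symTensors p q ht) (Submodule.smul_mem _ _ (der_mem_symTensors _ _ ht))

lemma symDer_mem_homogeneous (p q : ι ⊕ ι) {c : ι → ℤ} {n : ℤ} (ht : t ∈ homogeneous c n) :
    symDer p q t ∈ homogeneous c (n + grade c q - grade c p) := by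
  have h := der_mem_homogeneous q.swap p.swap ht
  rw [grade_swap, grade_swap, show n + -grade c p - -grade c q = n + grade c q - grade c p by ring]
    at h
  exact sub_mem (der_mem_homogeneous p q ht) (Submodule.smul_mem _ _ h)

def IsInvariant (P : Submodule ℂ (Tensor ι)) : Prop := ∀ p q, ∀ t ∈ P, symDer p q t ∈ P

def cube (p : ι ⊕ ι) : Tensor ι := fun k l m => if k = p ∧ l = p ∧ m = p then 1 else 0

lemma symTensors.eq_smul_cube (ht : t ∈ symTensors) {e : ι ⊕ ι}
    (h : ∀ p ≠ e, ∀ l m, t p l m = 0) : t = t e e e • cube e := by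
  ext k l m
  by_cases hk : k = e
  · by_cases hl : l = e
    · by_cases hm : m = e
      · simp [cube, hk, hl, hm]
      · simp [cube, hm, symTensors.apply_comm₁₃ ht k l m, h m hm]
    · simp [cube, hl, ht.1 k l m, h l hl]
  · simp [cube, hk, h k hk]

lemma der_der_der_cube {p q : ι ⊕ ι} (h : p ≠ q) :
    der p q (der p q (der p q (cube p))) = (6 : ℂ) • cube q := by
  ext k l m
  simp only [der_apply, cube, Pi.smul_apply, smul_eq_mul]
  split_ifs <;> simp_all
  norm_num

lemma IsInvariant.cube_swap_mem {P : Submodule ℂ (Tensor ι)} (hP : IsInvariant P) {p : ι ⊕ ι}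
    (h : cube p ∈ P) : cube p.swap ∈ P := by
  have hder : ∀ t ∈ P, der p p.swap t ∈ P := fun t ht => by
    have h2 := P.smul_mem (2 : ℂ)⁻¹ (hP p p.swap t ht)
    rwa [symDer_swap, LinearMap.smul_apply, smul_smul, inv_mul_cancel₀ two_ne_zero, one_smul] at h2
  have h6 := P.smul_mem (6 : ℂ)⁻¹ (hder _ (hder _ (hder _ h)))
  rwa [der_der_der_cube (by cases p <;> simp), smul_smul, inv_mul_cancel₀ (by norm_num),
    one_smul] at h6

def squareBilin (z : ι) : V →ₗ[ℂ] V →ₗ[ℂ] V :=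
  LinearMap.mk₂ ℂ (fun v w => (v (inl z) * w (inl z)) • Pi.single (inr z) 1)
    (fun _ _ _ => by simp only [Pi.add_apply, add_mul, add_smul])
    (fun _ _ _ => by simp only [Pi.smul_apply, smul_eq_mul, mul_assoc, smul_smul])
    (fun _ _ _ => by simp only [Pi.add_apply, mul_add, add_smul])
    (fun _ _ _ => by simp only [Pi.smul_apply, smul_eq_mul, mul_left_comm _ (_ : ℂ), smul_smul])

lemma squareBilin_apply (z : ι) (v w : V) :
    squareBilin z v w = (v (inl z) * w (inl z)) • Pi.single (inr z) 1 := rfl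

lemma squareBilin_comm (z : ι) (v w : V) : squareBilin z v w = squareBilin z w v := by
  rw [squareBilin_apply, squareBilin_apply, mul_comm]

lemma squareBilin_ne_zero (z : ι) : squareBilin z ≠ 0 := by
  intro h
  have := congr_fun (LinearMap.congr_fun₂ h (Pi.single (inl z) 1) (Pi.single (inl z) 1)) (inr z)
  simp [squareBilin_apply] at this

end

variable [Fintype ι]

def symplecticForm : V →ₗ[ℂ] V →ₗ[ℂ] ℂ :=
  LinearMap.mk₂ ℂ (fun v w => ∑ i, (v (inl i) * w (inr i) - v (inr i) * w (inl i)))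
    (fun _ _ _ => by simp only [Pi.add_apply, ← sum_add_distrib]; congr! 1; ring)
    (fun _ _ _ => by simp only [Pi.smul_apply, smul_eq_mul, mul_sum]; congr! 1; ring)
    (fun _ _ _ => by simp only [Pi.add_apply, ← sum_add_distrib]; congr! 1; ring)
    (fun _ _ _ => by simp only [Pi.smul_apply, smul_eq_mul, mul_sum]; congr! 1; ring)

local notation "ω" => symplecticForm

lemma symplecticForm_apply (v w : V) :
    ω v w = ∑ i, (v (inl i) * w (inr i) - v (inr i) * w (inl i)) := rfl

lemma symplecticForm_flip (v w : V) : ω w v = -ω v w := by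
  simp only [symplecticForm_apply, ← sum_neg_distrib]; congr! 1; ring

def pairing : LinearMap.BilinForm ℂ (Tensor ι) := LinearMap.mk₂ ℂ
  (fun s t => ∑ k, ∑ l, ∑ m, sign k * sign l * sign m * s k l m * t k.swap l.swap m.swap)
  (fun _ _ _ => by simp only [Pi.add_apply, ← sum_add_distrib]; congr! 3; ring)
  (fun _ _ _ => by simp only [Pi.smul_apply, smul_eq_mul, mul_sum]; congr! 3; ring)
  (fun _ _ _ => by simp only [Pi.add_apply, ← sum_add_distrib]; congr! 3; ring)
  (fun _ _ _ => by simp only [Pi.smul_apply, smul_eq_mul, mul_sum]; congr! 3; ring)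

lemma pairing_apply (s t : Tensor ι) : pairing s t =
    ∑ k, ∑ l, ∑ m, sign k * sign l * sign m * s k l m * t k.swap l.swap m.swap := rfl

variable [DecidableEq ι]

lemma symplecticForm_single_left (p : ι ⊕ ι) (a : ℂ) (w : V) :
    ω (Pi.single p a) w = a * sign p * w p.swap := by
  cases p <;> simp [symplecticForm_apply, Pi.single_apply]

lemma symplecticForm_single_right (v : V) (p : ι ⊕ ι) (a : ℂ) :
    ω v (Pi.single p a) = a * sign p.swap * v p.swap := by
  rw [symplecticForm_flip, symplecticForm_single_left, sign_swap]; ring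

lemma eq_zero_of_symplecticForm_single (u : V) (h : ∀ m, ω u (Pi.single m 1) = 0) : u = 0 := by
  ext r
  have := h r.swap
  rw [symplecticForm_single_right, Sum.swap_swap, one_mul] at this
  exact (mul_eq_zero.mp this).resolve_left (sign_ne_zero r)

def IsSymplectic (x : Matrix (ι ⊕ ι) (ι ⊕ ι) ℂ) : Prop :=
  ∀ v w, ω (x *ᵥ v) w + ω v (x *ᵥ w) = 0

def spSingle (p q : ι ⊕ ι) : Matrix (ι ⊕ ι) (ι ⊕ ι) ℂ :=
  Matrix.single p q 1 - (sign p * sign q) • Matrix.single q.swap p.swap 1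

lemma isSymplectic_spSingle (p q : ι ⊕ ι) : IsSymplectic (spSingle p q) := by
  intro v w
  simp only [spSingle, Matrix.sub_mulVec, Matrix.smul_mulVec, Matrix.single_mulVec_eq, map_sub,
    map_smul, LinearMap.sub_apply, LinearMap.smul_apply, smul_eq_mul,
    symplecticForm_single_left, symplecticForm_single_right, sign_swap, Sum.swap_swap]
  linear_combination sign p * (v p.swap * w q - v q * w p.swap) * sign_mul_self q

lemma sum_spSingle_mul (p q k : ι ⊕ ι) (f : ι ⊕ ι → ℂ) : ∑ j, spSingle p q j k * f j =
    (if k = q then f p else 0) - sign p * sign q * (if k = p.swap then f q.swap else 0) := by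
  simp [spSingle, Matrix.single_apply, sub_mul, sum_sub_distrib, ite_and, eq_comm]

def tensorAct (x : Matrix (ι ⊕ ι) (ι ⊕ ι) ℂ) (t : Tensor ι) : Tensor ι := fun k l m =>
  -(∑ j, x j k * t j l m) - (∑ j, x j l * t k j m) - ∑ j, x j m * t k l j

lemma tensorAct_spSingle (p q : ι ⊕ ι) (t : Tensor ι) :
    tensorAct (spSingle p q) t = -symDer p q t := by
  ext k l m
  simp only [tensorAct, sum_spSingle_mul, symDer, der_apply, LinearMap.sub_apply,
    LinearMap.smul_apply, Pi.neg_apply, Pi.sub_apply, Pi.smul_apply, smul_eq_mul]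
  ring

def toTensor : (V →ₗ[ℂ] V →ₗ[ℂ] V) →ₗ[ℂ] Tensor ι where
  toFun B k l m := ω (B (Pi.single k 1) (Pi.single l 1)) (Pi.single m 1)
  map_add' _ _ := by ext; simp
  map_smul' _ _ := by ext; simp

lemma toTensor_apply (B : V →ₗ[ℂ] V →ₗ[ℂ] V) (k l m : ι ⊕ ι) :
    toTensor B k l m = ω (B (Pi.single k 1) (Pi.single l 1)) (Pi.single m 1) := rfl

lemma toTensor_injective : Function.Injective (toTensor (ι := ι)) := by
  refine (injective_iff_map_eq_zero _).mpr fun B hB => ?_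
  refine LinearMap.ext_basis (Pi.basisFun ℂ _) (Pi.basisFun ℂ _) fun k l => ?_
  exact eq_zero_of_symplecticForm_single _ fun m => by
    simpa [toTensor_apply] using congr_fun₃ hB k l m

lemma toTensor_mem_symTensors {B : V →ₗ[ℂ] V →ₗ[ℂ] V} (h₁ : ∀ v w, B v w = B w v)
    (h₂ : ∀ v w u, ω (B v w) u + ω w (B v u) = 0) : toTensor B ∈ symTensors := by
  refine ⟨fun k l m => by rw [toTensor_apply, h₁]; rfl, fun k l m => ?_⟩
  simp only [toTensor_apply]
  linear_combination h₂ _ _ _ - symplecticForm_flip (B (Pi.single k 1) (Pi.single m 1)) _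

lemma mulVec_single_one_eq_sum (x : Matrix (ι ⊕ ι) (ι ⊕ ι) ℂ) (k : ι ⊕ ι) :
    x *ᵥ Pi.single k 1 = ∑ j, x j k • Pi.single j 1 := by
  rw [Matrix.mulVec_single_one]
  exact pi_eq_sum_univ' _

lemma toTensor_eq_tensorAct {x : Matrix (ι ⊕ ι) (ι ⊕ ι) ℂ} (hx : IsSymplectic x)
    {B B' : V →ₗ[ℂ] V →ₗ[ℂ] V} (h : ∀ v w, B' v w = x *ᵥ B v w - B (x *ᵥ v) w - B v (x *ᵥ w)) :
    toTensor B' = tensorAct x (toTensor B) := by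
  ext k l m
  have hω := hx (B (Pi.single k 1) (Pi.single l 1)) (Pi.single m 1)
  simp only [toTensor_apply, tensorAct, h, map_sub, LinearMap.sub_apply, mulVec_single_one_eq_sum,
    map_sum, map_smul, LinearMap.sum_apply, LinearMap.smul_apply, smul_eq_mul] at hω ⊢
  linear_combination hω

lemma pairing_der_right (p q : ι ⊕ ι) (s t : Tensor ι) :
    pairing s (der p q t) = sign p * sign q * pairing (der q.swap p.swap s) t := by
  have h : sign p * pairing s (der p q t) = sign q * pairing (der q.swap p.swap s) t := by
    simp only [pairing_apply, der_apply, swap_eq_iff, mul_add, add_mul, mul_ite, ite_mul, mul_zero,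
      zero_mul, sum_add_distrib, sum_ite_irrel, sum_const_zero, sum_ite_eq', mem_univ, if_true,
      Sum.swap_swap, sign_swap, mul_sum]
    ring_nf
  linear_combination sign p * h - pairing s (der p q t) * sign_mul_self p

lemma pairing_symDer_right (p q : ι ⊕ ι) (s t : Tensor ι) :
    pairing s (symDer p q t) = -pairing (symDer p q s) t := by
  simp only [symDer, LinearMap.sub_apply, LinearMap.smul_apply, map_sub, map_smul, smul_eq_mul,
    pairing_der_right p q, pairing_der_right q.swap p.swap, Sum.swap_swap, sign_swap]
  linear_combination
    (-pairing (der p q s) t) * (sign q * sign q * sign_mul_self p + sign_mul_self q)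

lemma pairing_cube_cube_swap (p : ι ⊕ ι) : pairing (cube p) (cube p.swap) = sign p := by
  simp [pairing_apply, cube, ite_and, swap_eq_iff]

variable {P : Submodule ℂ (Tensor ι)}

lemma IsInvariant.symTensors_inf_orthogonal (hP : IsInvariant P) :
    IsInvariant (symTensors ⊓ pairing.orthogonal P) := by
  rintro p q t ⟨hts, hto⟩
  refine ⟨symDer_mem_symTensors p q hts, fun u hu => ?_⟩
  change pairing u (symDer p q t) = 0
  rw [pairing_symDer_right, hto _ (hP p q u hu), neg_zero]

def gradeOp (c : ι → ℤ) : Module.End ℂ (Tensor ι) := ∑ i, (c i : ℂ) • symDer (inl i) (inl i)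

lemma sum_mul_indicator_sub (c : ι → ℤ) (k : ι ⊕ ι) :
    ∑ i, (c i : ℂ) * ((if k = inl i then 1 else 0) - (if k = inr i then 1 else 0)) = grade c k := by
  cases k <;> simp

lemma gradeOp_apply (c : ι → ℤ) (t : Tensor ι) (k l m : ι ⊕ ι) :
    gradeOp c t k l m = ((grade c k + grade c l + grade c m : ℤ) : ℂ) * t k l m := by
  simp only [gradeOp, symDer, LinearMap.sum_apply, Finset.sum_apply, LinearMap.smul_apply,
    LinearMap.sub_apply, Pi.smul_apply, Pi.sub_apply, der_self_apply, sign_inl, Sum.swap_inl]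
  push_cast
  rw [← sum_mul_indicator_sub c k, ← sum_mul_indicator_sub c l, ← sum_mul_indicator_sub c m]
  simp only [smul_eq_mul, ← sum_add_distrib, sum_mul]
  refine sum_congr rfl fun i _ => ?_
  ring

lemma IsInvariant.gradeOp_mem (hP : IsInvariant P) (c : ι → ℤ) {t : Tensor ι} (ht : t ∈ P) :
    gradeOp c t ∈ P := by
  rw [gradeOp, LinearMap.sum_apply]
  exact sum_mem fun i _ => P.smul_mem _ (hP _ _ t ht)

lemma IsInvariant.exists_ne_zero_mem_homogeneous (hP : IsInvariant P) (hne : P ≠ ⊥) (c : ι → ℤ) :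
    ∃ n, ∃ t ∈ P ⊓ homogeneous c n, t ≠ 0 := by
  obtain ⟨t, htP, ht0, μ, hμ⟩ :=
    (gradeOp c).exists_eigenvector_mem (fun _ => hP.gradeOp_mem c) hne
  obtain ⟨k, l, m, hklm⟩ : ∃ k l m, t k l m ≠ 0 := by
    by_contra! h
    exact ht0 (funext₃ h)
  have heig : ∀ k l m, ((grade c k + grade c l + grade c m : ℤ) : ℂ) * t k l m = μ * t k l m :=
    fun k l m => by rw [← gradeOp_apply, hμ]; rfl
  refine ⟨grade c k + grade c l + grade c m, t, ⟨htP, fun k' l' m' hne' => ?_⟩, ht0⟩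
  have h' := heig k' l' m'
  rw [← mul_right_cancel₀ hklm (heig k l m), ← sub_eq_zero, ← sub_mul] at h'
  refine (mul_eq_zero.mp h').resolve_left ?_
  exact_mod_cast sub_ne_zero.mpr hne'

lemma IsInvariant.exists_top_homogeneous (hP : IsInvariant P) (hne : P ≠ ⊥) (c : ι → ℤ) :
    ∃ n, ∃ t ∈ P ⊓ homogeneous c n, t ≠ 0 ∧ ∀ n' > n, ∀ s ∈ P ⊓ homogeneous c n', s = 0 := by
  obtain ⟨b, hb⟩ := (Set.finite_range fun x : (ι ⊕ ι) × (ι ⊕ ι) × (ι ⊕ ι) =>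
    grade c x.1 + grade c x.2.1 + grade c x.2.2).bddAbove
  obtain ⟨n, ⟨t, ht, ht0⟩, hmax⟩ := Int.exists_greatest_of_bdd
    (P := fun n => ∃ t ∈ P ⊓ homogeneous c n, t ≠ 0)
    ⟨b, fun n ⟨t, ht, ht0⟩ => by
      obtain ⟨k, l, m, rfl⟩ := exists_grade_eq_of_mem_homogeneous ht.2 ht0
      exact hb ⟨(k, l, m), rfl⟩⟩
    (hP.exists_ne_zero_mem_homogeneous hne c)
  refine ⟨n, t, ht, ht0, fun n' hn' s hs => ?_⟩
  by_contra hs0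
  exact absurd (hmax n' ⟨s, hs, hs0⟩) (not_le.mpr hn')

theorem IsInvariant.cube_inl_mem (hP : IsInvariant P) (hPs : P ≤ symTensors) (hne : P ≠ ⊥)
    (z : ι) : cube (inl z) ∈ P := by
  -- With these weights both `E_{inr i, inl i}` and `E_{inl j, inl z}` raise the degree.
  let c : ι → ℤ := fun i => if i = z then 2 else 1
  obtain ⟨n, t, ⟨htP, htn⟩, ht0, htop⟩ := hP.exists_top_homogeneous hne c
  have hts := hPs htP
  have raise : ∀ p q, grade c p < grade c q → symDer p q t = 0 := fun p q hpq =>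
    htop _ (by omega) _ ⟨hP p q t htP, symDer_mem_homogeneous p q htn⟩
  have hinr : ∀ i l m, t (inr i) l m = 0 := fun i => by
    have h := raise (inr i) (inr i).swap
      (by simp only [c, Sum.swap_inr, grade_inl, grade_inr]; split_ifs <;> omega)
    rw [symDer_swap, LinearMap.smul_apply, smul_eq_zero] at h
    exact symTensors.apply_eq_zero_of_der_eq_zero hts (h.resolve_left two_ne_zero)
  have hinl : ∀ j ≠ z, ∀ l m, t (inl j) l m = 0 := fun j hj => by
    have h := raise (inl j) (inl z) (by simp [c, hj])
    simp only [symDer, LinearMap.sub_apply, LinearMap.smul_apply, Sum.swap_inl,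
      symTensors.der_eq_zero hts (hinr z), smul_zero, sub_zero] at h
    exact symTensors.apply_eq_zero_of_der_eq_zero hts h
  set a := t (inl z) (inl z) (inl z)
  have hta : t = a • cube (inl z) := symTensors.eq_smul_cube hts fun p hp => by
    rcases p with j | j
    · exact hinl j fun h => hp (congrArg inl h)
    · exact hinr j
  have ha : a ≠ 0 := fun h => ht0 (by rw [hta, h, zero_smul])
  have h := P.smul_mem a⁻¹ htP
  rwa [hta, smul_smul, inv_mul_cancel₀ ha, one_smul] at h

lemma symplecticForm_squareBilin (z : ι) (v w u : V) :
    ω (squareBilin z v w) u + ω w (squareBilin z v u) = 0 := by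
  simp only [squareBilin_apply, map_smul, LinearMap.smul_apply, smul_eq_mul,
    symplecticForm_single_left, symplecticForm_single_right, Sum.swap_inr, sign_inr, sign_inl]
  ring

theorem IsInvariant.eq_symTensors [Nonempty ι] (hP : IsInvariant P) (hPs : P ≤ symTensors)
    (hne : P ≠ ⊥) : P = symTensors := by
  obtain ⟨z⟩ := ‹Nonempty ι›
  by_contra hPS
  have hZ := pairing.inf_orthogonal_ne_bot (lt_of_le_of_ne hPs hPS)
  have h₁ := hP.symTensors_inf_orthogonal.cube_inl_mem inf_le_left hZ z
  have h₂ := hP.cube_swap_mem (p := inl z) (hP.cube_inl_mem hPs hne z)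
  have h₃ : pairing (cube (inr z)) (cube (inr z).swap) = 0 := h₁.2 _ h₂
  rw [pairing_cube_cube_swap] at h₃
  exact sign_ne_zero _ h₃

end SpSym3
open SpSym3 in
/-- For `N ≥ 1`, with `ω` the standard symplectic form on `ℂ^{2N}`
(modelled on `(Fin N ⊕ Fin N) → ℂ`), the space `W` of symmetric bilinear maps
`B : ℂ^{2N} × ℂ^{2N} → ℂ^{2N}` all of whose partial evaluations `w ↦ B(v,w)` lie in
`sp(2N,ℂ)` is a nonzero irreducible module over the symplectic Lie algebra `sp(2N,ℂ)`,
for the action `(x·B)(v,w) = x(B(v,w)) − B(xv,w) − B(v,xw)`: its only Lie submodules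
are `0` and `W`. -/
theorem sp_irreducible_sym2 (N : ℕ) (hN : 1 ≤ N)
    (ω : ((Fin N ⊕ Fin N) → ℂ) → ((Fin N ⊕ Fin N) → ℂ) → ℂ)
    (hω : ∀ v w, ω v w =
      ∑ i : Fin N, (v (Sum.inl i) * w (Sum.inr i) - v (Sum.inr i) * w (Sum.inl i)))
    (W : Set (((Fin N ⊕ Fin N) → ℂ) →ₗ[ℂ] ((Fin N ⊕ Fin N) → ℂ) →ₗ[ℂ]
      ((Fin N ⊕ Fin N) → ℂ)))
    (hW : W = {B | (∀ v w, B v w = B w v) ∧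
      ∀ v w u, ω (B v w) u + ω w (B v u) = 0})
    (act : Matrix (Fin N ⊕ Fin N) (Fin N ⊕ Fin N) ℂ →
      (((Fin N ⊕ Fin N) → ℂ) →ₗ[ℂ] ((Fin N ⊕ Fin N) → ℂ) →ₗ[ℂ] ((Fin N ⊕ Fin N) → ℂ)) →
      (((Fin N ⊕ Fin N) → ℂ) →ₗ[ℂ] ((Fin N ⊕ Fin N) → ℂ) →ₗ[ℂ] ((Fin N ⊕ Fin N) → ℂ)))
    (hact : ∀ x B v w,
      act x B v w = x.mulVec (B v w) - B (x.mulVec v) w - B v (x.mulVec w)) :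
    (∃ B ∈ W, B ≠ 0) ∧
      ∀ U : Submodule ℂ (((Fin N ⊕ Fin N) → ℂ) →ₗ[ℂ] ((Fin N ⊕ Fin N) → ℂ) →ₗ[ℂ]
          ((Fin N ⊕ Fin N) → ℂ)),
        (U : Set _) ⊆ W →
        (∀ B ∈ U, ∀ x : Matrix (Fin N ⊕ Fin N) (Fin N ⊕ Fin N) ℂ,
          (∀ v w, ω (x.mulVec v) w + ω v (x.mulVec w) = 0) → act x B ∈ U) →
        U = ⊥ ∨ (U : Set _) = W := by
  obtain rfl : ω = fun v w => symplecticForm v w := funext₂ hω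
  subst hW
  have : Nonempty (Fin N) := ⟨⟨0, hN⟩⟩
  refine ⟨⟨squareBilin ⟨0, hN⟩, ⟨squareBilin_comm _, symplecticForm_squareBilin _⟩,
    squareBilin_ne_zero _⟩, fun U hUW hU => ?_⟩
  rcases eq_or_ne U ⊥ with hbot | hbot
  · exact Or.inl hbot
  have hinv : IsInvariant (U.map toTensor) := by
    rintro p q _ ⟨B, hB, rfl⟩
    refine ⟨(-1 : ℂ) • act (spSingle p q) B,
      U.smul_mem _ (hU B hB _ (isSymplectic_spSingle p q)), ?_⟩
    rw [map_smul, toTensor_eq_tensorAct (isSymplectic_spSingle p q) (hact _ B), tensorAct_spSingle,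
      neg_one_smul, neg_neg]
  have hsym : U.map toTensor ≤ symTensors := Submodule.map_le_iff_le_comap.mpr fun B hB =>
    toTensor_mem_symTensors (hUW hB).1 (hUW hB).2
  have hne : U.map toTensor ≠ ⊥ := fun h => hbot <|
    Submodule.map_injective_of_injective toTensor_injective (h.trans (Submodule.map_bot _).symm)
  refine Or.inr (hUW.antisymm fun B hB => ?_)
  obtain ⟨B', hB', hBB'⟩ :=
    (hinv.eq_symTensors hsym hne).ge (toTensor_mem_symTensors hB.1 hB.2)
  exact toTensor_injective hBB' ▸ hB'
end

section
/- Let g be a finite-dimensional simple Lie algebra over ℂ, let m ≥ 0, and let g_m = g ⊗ ℂ[t]/(t^{m+1}) be the truncated current Lie algebra. Then for every nonzero x ∈ g, the Lie subalgebra of g_m generated by the subalgebra g⊗1 together with the single element K = x⊗t equals all of g_m. In particular, g_m is generated by g and one element of g⊗t. -/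
open scoped TensorProduct

/-- The truncated polynomial ring `ℂ[t]/(t^(m+1))`. -/
abbrev TruncPoly (m : ℕ) : Type :=
  Polynomial ℂ ⧸ Ideal.span {(Polynomial.X : Polynomial ℂ) ^ (m + 1)}

/-- The class of `t` in `ℂ[t]/(t^(m+1))`. -/
noncomputable def truncT (m : ℕ) : TruncPoly m :=
  Ideal.Quotient.mk _ (Polynomial.X : Polynomial ℂ)

/-- The truncated current Lie algebra `g ⊗ ℂ[t]/(t^(m+1))`. -/
abbrev TruncCurrent (m : ℕ) (g : Type*) [LieRing g] [LieAlgebra ℂ g] : Type _ :=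
  TruncPoly m ⊗[ℂ] g

noncomputable instance (m : ℕ) (g : Type*) [LieRing g] [LieAlgebra ℂ g] :
    LieAlgebra ℂ (TruncCurrent m g) where
  lie_smul t x y := by
    rw [← algebraMap_smul (TruncPoly m) t y]
    rw [lie_smul (algebraMap ℂ (TruncPoly m) t) x y]
    rw [algebraMap_smul]

/-- If a Lie subalgebra of the truncated current algebra contains `1 ⊗ y` for all `y`,
and contains `p ⊗ y₀` for some nonzero `y₀`, then it contains `p ⊗ y` for all `y`. -/
lemma aux_all (m : ℕ) (g : Type*) [LieRing g] [LieAlgebra ℂ g]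
    [LieAlgebra.IsSimple ℂ g]
    (L : LieSubalgebra ℂ (TruncCurrent m g))
    (h1 : ∀ y : g, ((1 : TruncPoly m) ⊗ₜ[ℂ] y : TruncCurrent m g) ∈ L)
    (p : TruncPoly m) (y₀ : g) (hy₀ : y₀ ≠ 0)
    (hmem : (p ⊗ₜ[ℂ] y₀ : TruncCurrent m g) ∈ L) :
    ∀ y : g, (p ⊗ₜ[ℂ] y : TruncCurrent m g) ∈ L := by
  set I : LieIdeal ℂ g :=
    { carrier := {y : g | (p ⊗ₜ[ℂ] y : TruncCurrent m g) ∈ L}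
      add_mem' := by
        intro a b ha hb
        simp only [Set.mem_setOf_eq] at *
        rw [TensorProduct.tmul_add]
        exact L.add_mem ha hb
      zero_mem' := by
        simp only [Set.mem_setOf_eq, TensorProduct.tmul_zero]
        exact L.zero_mem
      smul_mem' := by
        intro c a ha
        simp only [Set.mem_setOf_eq] at *
        rw [TensorProduct.tmul_smul]
        exact L.smul_mem c ha
      lie_mem := by
        intro z y hy
        simp only [Set.mem_setOf_eq] at *
        have : ⁅((1 : TruncPoly m) ⊗ₜ[ℂ] z : TruncCurrent m g), p ⊗ₜ[ℂ] y⁆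
            = p ⊗ₜ[ℂ] ⁅z, y⁆ := by
          rw [LieAlgebra.ExtendScalars.bracket_tmul, one_mul]
        rw [← this]
        exact L.lie_mem (h1 z) hy } with hI
  have hy₀I : y₀ ∈ I := hmem
  rcases LieAlgebra.IsSimple.eq_bot_or_eq_top I with h | h
  · rw [h] at hy₀I
    exact absurd (by simpa using hy₀I) hy₀
  · intro y
    have : y ∈ I := by rw [h]; trivial
    exact this

/-- For a finite-dimensional simple complex Lie algebra `g` and any
nonzero `x ∈ g`, the Lie subalgebra (over `ℂ`) of the truncated current Lie algebra
`g_m = g ⊗ ℂ[t]/(t^(m+1))` generated by `g ⊗ 1` together with `K = x ⊗ t` is all of `g_m`. -/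
theorem truncCurrent_lieSpan_eq_top (g : Type*) [LieRing g] [LieAlgebra ℂ g]
    [FiniteDimensional ℂ g] [LieAlgebra.IsSimple ℂ g] (m : ℕ) (x : g) (hx : x ≠ 0) :
    LieSubalgebra.lieSpan ℂ (TruncCurrent m g)
      ((Set.range fun y : g => ((1 : TruncPoly m) ⊗ₜ[ℂ] y : TruncCurrent m g)) ∪
        {(truncT m ⊗ₜ[ℂ] x : TruncCurrent m g)}) = ⊤ := by
  set L := LieSubalgebra.lieSpan ℂ (TruncCurrent m g)
      ((Set.range fun y : g => ((1 : TruncPoly m) ⊗ₜ[ℂ] y : TruncCurrent m g)) ∪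
        {(truncT m ⊗ₜ[ℂ] x : TruncCurrent m g)}) with hL
  have h1 : ∀ y : g, ((1 : TruncPoly m) ⊗ₜ[ℂ] y : TruncCurrent m g) ∈ L := fun y =>
    LieSubalgebra.subset_lieSpan (Or.inl ⟨y, rfl⟩)
  have hK : (truncT m ⊗ₜ[ℂ] x : TruncCurrent m g) ∈ L :=
    LieSubalgebra.subset_lieSpan (Or.inr rfl)
  -- all `t^k ⊗ y` lie in `L`
  have key : ∀ k : ℕ, ∀ y : g, ((truncT m ^ k) ⊗ₜ[ℂ] y : TruncCurrent m g) ∈ L := by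
    -- nonabelian: get a nonzero bracket
    obtain ⟨a, b, hab⟩ : ∃ a b : g, ⁅a, b⁆ ≠ 0 := by
      by_contra h
      push_neg at h
      exact LieAlgebra.IsSimple.non_abelian (R := ℂ) ⟨fun a b => h a b⟩
    have step1 : ∀ y : g, ((truncT m ^ 1) ⊗ₜ[ℂ] y : TruncCurrent m g) ∈ L := by
      refine aux_all m g L h1 _ x hx ?_
      rw [pow_one]; exact hK
    intro k
    induction k with
    | zero => intro y; rw [pow_zero]; exact h1 y
    | succ n ih =>
      rcases Nat.eq_zero_or_pos n with hn | hn
      · subst hn; exact step1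
      · refine aux_all m g L h1 _ ⁅a, b⁆ hab ?_
        have : ⁅((truncT m ^ 1) ⊗ₜ[ℂ] a : TruncCurrent m g), (truncT m ^ n) ⊗ₜ[ℂ] b⁆
            = (truncT m ^ (n + 1)) ⊗ₜ[ℂ] ⁅a, b⁆ := by
          rw [LieAlgebra.ExtendScalars.bracket_tmul, ← pow_add]
          ring_nf
        rw [← this]
        exact L.lie_mem (step1 a) (ih b)
  -- conclude
  rw [eq_top_iff]
  intro z _
  induction z using TensorProduct.induction_on with
  | zero => exact L.zero_mem
  | add u v hu hv => exact L.add_mem (hu trivial) (hv trivial)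
  | tmul p y =>
    obtain ⟨q, rfl⟩ := Ideal.Quotient.mk_surjective p
    induction q using Polynomial.induction_on' with
    | add r s hr hs =>
      rw [map_add, TensorProduct.add_tmul]
      exact L.add_mem (hr trivial) (hs trivial)
    | monomial n c =>
      have : (Ideal.Quotient.mk _ (Polynomial.monomial n c) : TruncPoly m)
          = c • (truncT m ^ n) := by
        rw [← Polynomial.smul_X_eq_monomial]
        have := map_smul (Ideal.Quotient.mkₐ ℂ
          (Ideal.span {(Polynomial.X : Polynomial ℂ) ^ (m + 1)})) c
          ((Polynomial.X : Polynomial ℂ) ^ n)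
        simp only [Ideal.Quotient.mkₐ_eq_mk] at this
        rw [this, map_pow]
        rfl
      rw [this, ← TensorProduct.smul_tmul']
      exact L.smul_mem c (key n y)
end

section
/- Let g be a finite-dimensional simple Lie algebra over ℂ, let m ≥ 0, let g_m = g ⊗ ℂ[t]/(t^{m+1}) be the truncated current Lie algebra, and fix a nonzero x ∈ g, setting K = x⊗t ∈ g_m. Then for every Lie module R over g_m (with the underlying ℂ-vector space structure), the subspace of g_m-invariants R^{g_m} = {r ∈ R : ξ·r = 0 for all ξ ∈ g_m} equals {r ∈ R : (y⊗1)·r = 0 for all y ∈ g, and K·r = 0}; that is, R^{g_m} = { r ∈ R^{g} : K r = 0 }. -/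
/-!
The stabilizer `S` of `r` in `g_m` is a Lie subalgebra, so it suffices that `g ⊗ 1` and `x ⊗ t`
generate `g_m`. Once `g ⊗ 1 ⊆ S`, each `{y | a ⊗ y ∈ S}` is an ideal of `g`, and by simplicity
the one for `a = t` is all of `g`. Since `g = [g, g]` and `[a ⊗ u, b ⊗ v] = ab ⊗ [u, v]`, the `a`
with `a ⊗ g ⊆ S` are closed under multiplication, hence contain the subalgebra generated by `t`,
which is all of `ℂ[t]/(t^(m+1))`.
-/

open scoped TensorProduct

lemma LieAlgebra.IsSimple.lie_top_top (R L : Type*) [CommRing R] [LieRing L] [LieAlgebra R L]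
    [LieAlgebra.IsSimple R L] : ⁅(⊤ : LieIdeal R L), (⊤ : LieIdeal R L)⁆ = ⊤ := by
  refine (LieAlgebra.IsSimple.eq_bot_or_eq_top _).resolve_left fun h ↦ ?_
  refine LieAlgebra.IsSimple.non_abelian R (L := L) ⟨fun a b ↦ ?_⟩
  exact (LieSubmodule.lie_eq_bot_iff _ _).mp h a trivial b trivial

namespace LieSubalgebra

section

variable (R : Type*) {L M : Type*} [CommRing R] [LieRing L] [LieAlgebra R L]
  [AddCommGroup M] [Module R M] [LieRingModule L M] [LieModule R L M]

def stabilizer (m : M) : LieSubalgebra R L where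
  carrier := {x | ⁅x, m⁆ = 0}
  add_mem' {x y} hx hy := by simp_all [add_lie]
  zero_mem' := zero_lie m
  smul_mem' c x hx := by simp_all [smul_lie]
  lie_mem' {x y} hx hy := by simp_all

end

section

open TensorProduct LieAlgebra.ExtendScalars

variable {R A L : Type*} [CommRing R] [CommRing A] [Algebra R A] [LieRing L] [LieAlgebra R L]
  (S : LieSubalgebra R (A ⊗[R] L))

def coeffIdeal (hS : ∀ y : L, (1 : A) ⊗ₜ y ∈ S) (a : A) : LieIdeal R L where
  carrier := {y | a ⊗ₜ y ∈ S}
  add_mem' {y z} hy hz := by simpa [tmul_add] using S.add_mem hy hz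
  zero_mem' := by simp
  smul_mem' c y hy := by simpa [tmul_smul] using S.smul_mem c hy
  lie_mem {z y} hy := by simpa [bracket_tmul] using S.lie_mem (hS z) hy

@[simp] lemma mem_coeffIdeal {hS : ∀ y : L, (1 : A) ⊗ₜ y ∈ S} {a : A} {y : L} :
    y ∈ S.coeffIdeal hS a ↔ a ⊗ₜ y ∈ S := Iff.rfl

variable {S}

lemma coeffIdeal_eq_top [LieAlgebra.IsSimple R L] {hS : ∀ y : L, (1 : A) ⊗ₜ y ∈ S} {a : A}
    {x : L} (hx : x ≠ 0) (h : a ⊗ₜ x ∈ S) : S.coeffIdeal hS a = ⊤ :=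
  (LieAlgebra.IsSimple.eq_bot_or_eq_top _).resolve_left fun hbot ↦
    hx <| (LieSubmodule.mem_bot x).mp (hbot ▸ (S.mem_coeffIdeal (hS := hS)).mpr h)

lemma mul_tmul_mem (hL : ⁅(⊤ : LieIdeal R L), (⊤ : LieIdeal R L)⁆ = ⊤)
    (hS : ∀ y : L, (1 : A) ⊗ₜ y ∈ S) {a b : A} (ha : ∀ y : L, a ⊗ₜ y ∈ S)
    (hb : ∀ y : L, b ⊗ₜ y ∈ S) (y : L) : (a * b) ⊗ₜ y ∈ S := by
  have : ⁅(⊤ : LieIdeal R L), (⊤ : LieIdeal R L)⁆ ≤ S.coeffIdeal hS (a * b) :=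
    (LieSubmodule.lie_le_iff _ _ _).mpr fun u _ v _ ↦ by
      simpa [bracket_tmul] using S.lie_mem (ha u) (hb v)
  exact this (by rw [hL]; exact LieSubmodule.mem_top y)

lemma tmul_mem_of_mem_adjoin (hL : ⁅(⊤ : LieIdeal R L), (⊤ : LieIdeal R L)⁆ = ⊤)
    (hS : ∀ y : L, (1 : A) ⊗ₜ y ∈ S) {t : A} (ht : ∀ y : L, t ⊗ₜ y ∈ S) {a : A}
    (ha : a ∈ Algebra.adjoin R {t}) (y : L) : a ⊗ₜ y ∈ S := by
  induction ha using Algebra.adjoin_induction generalizing y with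
  | mem a ha => exact (Set.mem_singleton_iff.mp ha) ▸ ht y
  | algebraMap c =>
    simpa [Algebra.algebraMap_eq_smul_one, smul_tmul'] using S.smul_mem c (hS y)
  | add a b _ _ ha hb => simpa [add_tmul] using S.add_mem (ha y) (hb y)
  | mul a b _ _ ha hb => exact mul_tmul_mem hL hS ha hb y

lemma eq_top_of_forall_tmul_mem (h : ∀ (a : A) (y : L), a ⊗ₜ y ∈ S) : S = ⊤ := by
  rw [eq_top_iff]
  rintro ξ -
  induction ξ using TensorProduct.induction_on with
  | zero => exact S.zero_mem
  | tmul a y => exact h a y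
  | add ξ η hξ hη => exact S.add_mem hξ hη

end

end LieSubalgebra

lemma adjoin_truncT (m : ℕ) : Algebra.adjoin ℂ {truncT m} = ⊤ :=
  AdjoinRoot.adjoinRoot_eq_top

theorem truncCurrent_invariants_general (g : Type*) [LieRing g] [LieAlgebra ℂ g]
    [LieAlgebra.IsSimple ℂ g] (m : ℕ) (x : g) (hx : x ≠ 0)
    (R : Type*) [AddCommGroup R] [Module ℂ R] [LieRingModule (TruncCurrent m g) R]
    [LieModule ℂ (TruncCurrent m g) R] :
    {r : R | ∀ ξ : TruncCurrent m g, ⁅ξ, r⁆ = 0} =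
      {r : R | (∀ y : g, ⁅((1 : TruncPoly m) ⊗ₜ[ℂ] y : TruncCurrent m g), r⁆ = 0) ∧
        ⁅(truncT m ⊗ₜ[ℂ] x : TruncCurrent m g), r⁆ = 0} := by
  ext r
  refine ⟨fun h ↦ ⟨fun y ↦ h _, h _⟩, fun ⟨h1, hK⟩ ξ ↦ ?_⟩
  let S := LieSubalgebra.stabilizer ℂ (L := TruncCurrent m g) r
  have hS : ∀ y : g, (1 : TruncPoly m) ⊗ₜ y ∈ S := h1
  have ht (y : g) : truncT m ⊗ₜ y ∈ S := by
    rw [← S.mem_coeffIdeal (hS := hS), S.coeffIdeal_eq_top hx hK]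
    exact LieSubmodule.mem_top y
  have hS_top : S = ⊤ := S.eq_top_of_forall_tmul_mem fun _ ↦
    S.tmul_mem_of_mem_adjoin (LieAlgebra.IsSimple.lie_top_top ℂ g) hS ht
      (adjoin_truncT m ▸ Algebra.mem_top)
  show ξ ∈ S
  exact hS_top ▸ LieSubalgebra.mem_top ξ

/-- Let `g` be a finite-dimensional simple complex Lie algebra,
`g_m = g ⊗ ℂ[t]/(t^(m+1))` its truncated current Lie algebra, `x ∈ g` nonzero, and
`K = x ⊗ t`.  For any Lie module `R` over `g_m`, the space of `g_m`-invariants of `R`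
coincides with the set of elements of `R` annihilated by `g ⊗ 1` and by `K`, i.e.
`R^{g_m} = { r ∈ R^g | K r = 0 }`. -/
theorem truncCurrent_invariants (g : Type*) [LieRing g] [LieAlgebra ℂ g]
    [FiniteDimensional ℂ g] [LieAlgebra.IsSimple ℂ g] (m : ℕ) (x : g) (hx : x ≠ 0)
    (R : Type*) [AddCommGroup R] [Module ℂ R] [LieRingModule (TruncCurrent m g) R]
    [LieModule ℂ (TruncCurrent m g) R] :
    {r : R | ∀ ξ : TruncCurrent m g, ⁅ξ, r⁆ = 0} =
      {r : R | (∀ y : g, ⁅((1 : TruncPoly m) ⊗ₜ[ℂ] y : TruncCurrent m g), r⁆ = 0) ∧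
        ⁅(truncT m ⊗ₜ[ℂ] x : TruncCurrent m g), r⁆ = 0} :=
  truncCurrent_invariants_general g m x hx R
end

section
/- Let g be a Lie algebra over ℂ acting on ℂ^N via ρ₀ : g → gl(N,ℂ), let R = ℂ[v_i^{(j)} : 1 ≤ i ≤ N, j ∈ ℕ], and let ρ(x t^k) be the derivations defined by ρ(x t^k)(v_i^{(j)}) = (j!/(j−k)!) Σ_{i'} ρ₀(x)_{i i'} v_{i'}^{(j−k)} for j ≥ k and 0 otherwise. Let D̃ be the ℂ-derivation of R with D̃(v_i^{(j)}) = v_i^{(j+1)}. Then [ρ(x t^k), D̃] = k·ρ(x t^{k−1}) for all x ∈ g and k ≥ 1, and [ρ(x t^0), D̃] = 0. Consequently, if a ∈ R satisfies ρ(x t^k)(a) = 0 for all x ∈ g and k ∈ ℕ, then D̃(a) also satisfies ρ(x t^k)(D̃ a) = 0 for all x ∈ g and k ∈ ℕ; that is, D̃ maps g⊗ℂ[t]-invariants to g⊗ℂ[t]-invariants. -/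
/-!
On generators, `ρ(x tᵏ) v_i^{(j)} = j.descFactorial k • (ρ₀(x) v^{(j-k)})_i`, the falling factorial
vanishing exactly when `j < k`. Both sides of `[ρ(x tᵏ), D̃] = k ρ(x tᵏ⁻¹)` are derivations, so it
suffices to compare them on generators, where the identity becomes the Pascal-type rule
`(j+1).descFactorial k - j.descFactorial k = k * j.descFactorial (k-1)`. Invariance of `D̃ a` then
follows from `ρ(x tᵏ)(D̃ a) = [ρ(x tᵏ), D̃] a + D̃ (ρ(x tᵏ) a)`.
-/

open MvPolynomial

attribute [local instance 100] LieRing.ofAssociativeRing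

theorem Nat.succ_descFactorial_succ_eq_add (n k : ℕ) :
    (n + 1).descFactorial (k + 1) = n.descFactorial (k + 1) + (k + 1) * n.descFactorial k := by
  rw [Nat.succ_descFactorial_succ, Nat.descFactorial_succ, ← add_mul]
  rcases le_or_gt k n with hkn | hnk
  · congr 1; omega
  · simp [Nat.descFactorial_eq_zero_iff_lt.mpr hnk]

section CurrentAction

variable {R ι : Type*} [CommRing R] [Fintype ι]

/-- The `i`-th entry of `A v⁽ᵐ⁾`, where `v⁽ᵐ⁾ = (X (i', m))ᵢ'`. -/
noncomputable def matrixJet (A : Matrix ι ι R) (m : ℕ) (i : ι) : MvPolynomial (ι × ℕ) R :=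
  ∑ i', A i i' • X (i', m)

theorem map_matrixJet_of_shift (A : Matrix ι ι R)
    {D : Derivation R (MvPolynomial (ι × ℕ) R) (MvPolynomial (ι × ℕ) R)}
    (hD : ∀ i j, D (X (i, j)) = X (i, j + 1)) (m : ℕ) (i : ι) :
    D (matrixJet A m i) = matrixJet A (m + 1) i := by
  simp only [matrixJet, map_sum, Derivation.map_smul, hD]

/-- The falling factorial absorbs both the case `j < k` and the truncated subtraction `j - k`. -/
theorem apply_X_eq_descFactorial_smul {A : Matrix ι ι R} {k : ℕ}
    {d : MvPolynomial (ι × ℕ) R → MvPolynomial (ι × ℕ) R}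
    (hd : ∀ i j, k ≤ j →
      d (X (i, j)) = ((j.factorial / (j - k).factorial : ℕ) : R) • matrixJet A (j - k) i)
    (hd' : ∀ i j, j < k → d (X (i, j)) = 0) (i : ι) (j : ℕ) :
    d (X (i, j)) = (j.descFactorial k : R) • matrixJet A (j - k) i := by
  rcases le_or_gt k j with hkj | hjk
  · rw [hd i j hkj, Nat.descFactorial_eq_div hkj]
  · rw [hd' i j hjk, Nat.descFactorial_eq_zero_iff_lt.mpr hjk, Nat.cast_zero, zero_smul]

/-- At `k = 0` the truncated `k - 1` is harmless, as the factor `(k : R)` vanishes. -/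
theorem commutator_eq_smul_of_apply_X {A : Matrix ι ι R}
    {d : ℕ → Derivation R (MvPolynomial (ι × ℕ) R) (MvPolynomial (ι × ℕ) R)}
    (hd : ∀ k i j, d k (X (i, j)) = (j.descFactorial k : R) • matrixJet A (j - k) i)
    {D : Derivation R (MvPolynomial (ι × ℕ) R) (MvPolynomial (ι × ℕ) R)}
    (hD : ∀ i j, D (X (i, j)) = X (i, j + 1)) (k : ℕ) :
    ⁅d k, D⁆ = (k : R) • d (k - 1) := by
  refine derivation_ext fun ⟨i, j⟩ => ?_
  rw [Derivation.commutator_apply, Derivation.smul_apply, hD, hd, hd, hd, Derivation.map_smul,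
    map_matrixJet_of_shift A hD]
  cases k with
  | zero => simp
  | succ m =>
    rw [show j + 1 - (m + 1) = j - m by omega]
    have hshift : (j.descFactorial (m + 1) : R) • matrixJet A (j - (m + 1) + 1) i =
        (j.descFactorial (m + 1) : R) • matrixJet A (j - m) i := by
      rcases lt_or_ge m j with hmj | hjm
      · rw [show j - (m + 1) + 1 = j - m by omega]
      · rw [Nat.descFactorial_eq_zero_iff_lt.mpr (by omega), Nat.cast_zero, zero_smul, zero_smul]
    rw [hshift, ← sub_smul, Nat.add_sub_cancel, smul_smul, Nat.succ_descFactorial_succ_eq_add]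
    congr 1
    push_cast
    ring

end CurrentAction

/-- With the current-algebra action `ρ(x tᵏ)` on
`R = ℂ[v_i^{(j)} : 1 ≤ i ≤ N, j ∈ ℕ]` as before, and `D̃` the derivation with
`D̃(v_i^{(j)}) = v_i^{(j+1)}`, one has `[ρ(x tᵏ), D̃] = k·ρ(x t^{k−1})` for `k ≥ 1` and
`[ρ(x t⁰), D̃] = 0`; consequently `D̃` maps `g ⊗ ℂ[t]`-invariants of `R` to
`g ⊗ ℂ[t]`-invariants. -/
theorem current_action_commutes_with_total_derivative {g : Type*} [LieRing g]
    [LieAlgebra ℂ g] (N : ℕ) (ρ₀ : g →ₗ⁅ℂ⁆ Matrix (Fin N) (Fin N) ℂ)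
    (ρ : g → ℕ → Derivation ℂ (MvPolynomial (Fin N × ℕ) ℂ) (MvPolynomial (Fin N × ℕ) ℂ))
    (hρ : ∀ (x : g) (k : ℕ) (i : Fin N) (j : ℕ), k ≤ j →
      ρ x k (X (i, j)) = ((j.factorial / (j - k).factorial : ℕ) : ℂ) •
        ∑ i' : Fin N, ρ₀ x i i' • X (i', j - k))
    (hρ' : ∀ (x : g) (k : ℕ) (i : Fin N) (j : ℕ), j < k → ρ x k (X (i, j)) = 0)
    (D : Derivation ℂ (MvPolynomial (Fin N × ℕ) ℂ) (MvPolynomial (Fin N × ℕ) ℂ))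
    (hD : ∀ (i : Fin N) (j : ℕ), D (X (i, j)) = X (i, j + 1)) :
    (∀ (x : g) (k : ℕ), 1 ≤ k → ⁅ρ x k, D⁆ = (k : ℂ) • ρ x (k - 1)) ∧
    (∀ x : g, ⁅ρ x 0, D⁆ = 0) ∧
    (∀ a : MvPolynomial (Fin N × ℕ) ℂ, (∀ (x : g) (k : ℕ), ρ x k a = 0) →
      ∀ (x : g) (k : ℕ), ρ x k (D a) = 0) := by
  have hcomm (x : g) (k : ℕ) : ⁅ρ x k, D⁆ = (k : ℂ) • ρ x (k - 1) :=
    commutator_eq_smul_of_apply_X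
      (fun k => apply_X_eq_descFactorial_smul (A := ρ₀ x) (hρ x k) (hρ' x k)) hD k
  refine ⟨fun x k _ => hcomm x k, fun x => by simpa using hcomm x 0, fun a ha x k => ?_⟩
  have h := congrArg (· a) (hcomm x k)
  simp only [Derivation.commutator_apply, Derivation.smul_apply, ha, map_zero, sub_zero,
    smul_zero] at h
  exact h
end

section
/- Let N ≥ 2 and let R_∞ be the polynomial ring ℂ[y_i^{(l)}, y*_i^{(j)} : 1 ≤ i ≤ N, l ≥ 1, j ≥ 0]. Let the current Lie algebra sl(N,ℂ) ⊗ ℂ[t] act on R_∞ by derivations, where for x ∈ sl(N,ℂ) and k ≥ 0: x t^k sends y_i^{(l)} to −((l−1)!/(l−1−k)!) Σ_{i'} x_{i' i} y_{i'}^{(l−k)} if l−1 ≥ k and to 0 otherwise, and sends y*_i^{(j)} to (j!/(j−k)!) Σ_{i'} x_{i i'} y*_{i'}^{(j−k)} if j ≥ k and to 0 otherwise. For k ≥ 0 set v_k = Σ_{l=0}^{k} binom(k,l) Σ_{i=1}^{N} y_i^{(l+1)} y*_i^{(k−l)}. Then every v_k is invariant under the action of sl(N,ℂ) ⊗ ℂ[t]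 (i.e. annihilated by every x t^k), and the elements v_0, v_1, v_2, … are linearly independent over ℂ. -/
open MvPolynomial

lemma nat_coeff_eq (n k l : ℕ) (h : l + k ≤ n) :
    n.choose (l+k) * ((l+k).factorial / l.factorial)
      = n.choose l * ((n-l).factorial / (n-l-k).factorial) := by
  have h1 : l.factorial ∣ (l+k).factorial := Nat.factorial_dvd_factorial (Nat.le_add_right _ _)
  have h2 : (n-l-k).factorial ∣ (n-l).factorial := Nat.factorial_dvd_factorial (by omega)
  have hpos : 0 < l.factorial * (n-l-k).factorial :=
    Nat.mul_pos l.factorial_pos (n-l-k).factorial_pos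
  apply Nat.eq_of_mul_eq_mul_right hpos
  have e1 : n.choose (l+k) * (l+k).factorial * (n - (l+k)).factorial = n.factorial :=
    Nat.choose_mul_factorial_mul_factorial h
  have e2 : n.choose l * l.factorial * (n - l).factorial = n.factorial :=
    Nat.choose_mul_factorial_mul_factorial (by omega)
  calc n.choose (l+k) * ((l+k).factorial / l.factorial) * (l.factorial * (n-l-k).factorial)
      = n.choose (l+k) * ((l+k).factorial / l.factorial * l.factorial) * (n-l-k).factorial := by ring
    _ = n.choose (l+k) * (l+k).factorial * (n-(l+k)).factorial := by
        rw [Nat.div_mul_cancel h1]; congr 2; omega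
    _ = n.factorial := e1
    _ = n.choose l * l.factorial * (n - l).factorial := e2.symm
    _ = n.choose l * ((n-l).factorial / (n-l-k).factorial * (n-l-k).factorial) * l.factorial := by
        rw [Nat.div_mul_cancel h2]; ring
    _ = n.choose l * ((n-l).factorial / (n-l-k).factorial) * (l.factorial * (n-l-k).factorial) := by ring


/-- Let `N ≥ 2` and let `R_∞` be the polynomial ring on the variables
`y_i^{(l)}` (`1 ≤ i ≤ N`, `l ≥ 1`) and `y*_i^{(j)}` (`1 ≤ i ≤ N`, `j ≥ 0`); here the
variable `y_i^{(l+1)}` is encoded as `X (Sum.inl (i, l))` (`l ≥ 0`) and `y*_i^{(j)}` as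
`X (Sum.inr (i, j))`.  The current Lie algebra `sl(N,ℂ) ⊗ ℂ[t]` acts on `R_∞` by
derivations `ρ x k` (the action of `x tᵏ`, for `x` a trace-zero matrix) with
`x tᵏ · y_i^{(l)} = −((l−1)!/(l−1−k)!) Σ_{i'} x_{i' i} y_{i'}^{(l−k)}` if `l−1 ≥ k`
(else `0`), and `x tᵏ · y*_i^{(j)} = (j!/(j−k)!) Σ_{i'} x_{i i'} y*_{i'}^{(j−k)}` if
`j ≥ k` (else `0`).  Setting
`v_k = Σ_{l=0}^{k} C(k,l) Σ_i y_i^{(l+1)} y*_i^{(k−l)}`, every `v_k` is annihilated by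
every `x tᵏ`, and the `v_k` are linearly independent over `ℂ`. -/
theorem jets_invariant_elements (N : ℕ) (hN : 2 ≤ N)
    (ρ : Matrix (Fin N) (Fin N) ℂ → ℕ →
      Derivation ℂ (MvPolynomial ((Fin N × ℕ) ⊕ (Fin N × ℕ)) ℂ)
        (MvPolynomial ((Fin N × ℕ) ⊕ (Fin N × ℕ)) ℂ))
    (hY : ∀ (x : Matrix (Fin N) (Fin N) ℂ), x.trace = 0 →
      ∀ (k : ℕ) (i : Fin N) (l : ℕ), k ≤ l →
        ρ x k (X (Sum.inl (i, l))) = -(((l.factorial / (l - k).factorial : ℕ) : ℂ) •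
          ∑ i' : Fin N, x i' i • X (Sum.inl (i', l - k))))
    (hY' : ∀ (x : Matrix (Fin N) (Fin N) ℂ), x.trace = 0 →
      ∀ (k : ℕ) (i : Fin N) (l : ℕ), l < k → ρ x k (X (Sum.inl (i, l))) = 0)
    (hZ : ∀ (x : Matrix (Fin N) (Fin N) ℂ), x.trace = 0 →
      ∀ (k : ℕ) (i : Fin N) (j : ℕ), k ≤ j →
        ρ x k (X (Sum.inr (i, j))) = ((j.factorial / (j - k).factorial : ℕ) : ℂ) •
          ∑ i' : Fin N, x i i' • X (Sum.inr (i', j - k)))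
    (hZ' : ∀ (x : Matrix (Fin N) (Fin N) ℂ), x.trace = 0 →
      ∀ (k : ℕ) (i : Fin N) (j : ℕ), j < k → ρ x k (X (Sum.inr (i, j))) = 0)
    (v : ℕ → MvPolynomial ((Fin N × ℕ) ⊕ (Fin N × ℕ)) ℂ)
    (hv : ∀ k, v k = ∑ l ∈ Finset.range (k + 1), (k.choose l : ℂ) •
      ∑ i : Fin N, X (Sum.inl (i, l)) * X (Sum.inr (i, k - l))) :
    (∀ (x : Matrix (Fin N) (Fin N) ℂ), x.trace = 0 →
      ∀ (k n : ℕ), ρ x k (v n) = 0) ∧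
    LinearIndependent ℂ v := by
  have i0 : Fin N := ⟨0, by omega⟩
  have heval : ∀ kk n, aeval (R := ℂ) (fun s : (Fin N × ℕ) ⊕ (Fin N × ℕ) => if s = Sum.inl (i0, kk) then (1:ℂ)
      else if s = Sum.inr (i0, 0) then 1 else 0) (v n) = if n = kk then 1 else 0 := by
    intro kk n
    rw [hv, map_sum]
    have step : ∀ l ∈ Finset.range (n+1),
        aeval (R := ℂ) (fun s : (Fin N × ℕ) ⊕ (Fin N × ℕ) => if s = Sum.inl (i0, kk) then (1:ℂ)
            else if s = Sum.inr (i0, 0) then 1 else 0)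
          ((n.choose l : ℂ) • ∑ i : Fin N, X (Sum.inl (i,l)) * X (Sum.inr (i, n-l)))
        = (n.choose l : ℂ) * (if l = kk ∧ n - l = 0 then 1 else 0) := by
      intro l hl
      rw [map_smul, map_sum, smul_eq_mul]
      congr 1
      have h1 : ∀ i ∈ Finset.univ (α := Fin N),
          aeval (R := ℂ) (fun s : (Fin N × ℕ) ⊕ (Fin N × ℕ) => if s = Sum.inl (i0, kk) then (1:ℂ)
              else if s = Sum.inr (i0, 0) then 1 else 0)
            (X (Sum.inl (i,l)) * X (Sum.inr (i,n-l)))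
          = (if i = i0 ∧ l = kk then 1 else 0) * (if i = i0 ∧ n - l = 0 then 1 else 0) := by
        intro i _
        rw [map_mul, aeval_X, aeval_X]
        congr 1
        · simp only [Sum.inl.injEq, Prod.mk.injEq, reduceCtorEq, if_false]
        · simp only [Sum.inr.injEq, Prod.mk.injEq, reduceCtorEq, if_false]
      rw [Finset.sum_congr rfl h1]
      by_cases h2 : l = kk <;> by_cases h3 : n - l = 0 <;>
        simp [h2, h3, ite_and, Finset.sum_ite_eq']
    rw [Finset.sum_congr rfl step]
    by_cases hnk : n = kk
    · subst hnk
      rw [Finset.sum_eq_single_of_mem n (Finset.self_mem_range_succ n)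
        (fun l hl hln => by
          rw [if_neg, mul_zero]
          rintro ⟨rfl, h⟩
          exact hln rfl)]
      simp
    · rw [if_neg hnk]
      refine Finset.sum_eq_zero fun l hl => ?_
      rw [if_neg, mul_zero]
      rintro ⟨rfl, h⟩
      exact hnk (by simp at hl; omega)
  constructor
  swap
  · rw [linearIndependent_iff']
    intro s g hg j hj
    have h := congrArg (aeval (R := ℂ) (fun s : (Fin N × ℕ) ⊕ (Fin N × ℕ) => if s = Sum.inl (i0, j) then (1:ℂ)
        else if s = Sum.inr (i0, 0) then 1 else 0)) hg
    rw [map_sum, map_zero] at h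
    simp only [map_smul, heval, smul_eq_mul, mul_ite, mul_one, mul_zero,
      Finset.sum_ite_eq', hj, if_pos] at h
    exact h
  intro x hx k n
  rw [hv, map_sum]
  set A : ℕ → MvPolynomial ((Fin N × ℕ) ⊕ (Fin N × ℕ)) ℂ := fun l =>
    -(((n.choose l * (l.factorial / (l-k).factorial) : ℕ) : ℂ) •
      ∑ i : Fin N, ∑ i' : Fin N, x i' i • (X (Sum.inl (i', l-k)) * X (Sum.inr (i, n-l)))) with hA
  set B : ℕ → MvPolynomial ((Fin N × ℕ) ⊕ (Fin N × ℕ)) ℂ := fun l =>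
    ((n.choose l * ((n-l).factorial / (n-l-k).factorial) : ℕ) : ℂ) •
      ∑ i : Fin N, ∑ i' : Fin N, x i i' • (X (Sum.inl (i, l)) * X (Sum.inr (i', n-l-k))) with hB
  have step : ∀ l ∈ Finset.range (n+1),
      ρ x k ((n.choose l : ℂ) • ∑ i : Fin N, X (Sum.inl (i,l)) * X (Sum.inr (i, n-l)))
        = (if k ≤ l then A l else 0) + (if l + k ≤ n then B l else 0) := by
    intro l hl
    have hln : l ≤ n := by simpa using Nat.lt_succ_iff.mp (Finset.mem_range.mp hl)
    rw [Derivation.map_smul, map_sum]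
    have expand : ∀ i ∈ Finset.univ (α := Fin N),
        ρ x k (X (Sum.inl (i,l)) * X (Sum.inr (i, n-l)))
          = X (Sum.inl (i,l)) * ρ x k (X (Sum.inr (i, n-l)))
            + X (Sum.inr (i, n-l)) * ρ x k (X (Sum.inl (i,l))) := by
      intro i _
      rw [Derivation.leibniz, smul_eq_mul, smul_eq_mul]
    rw [Finset.sum_congr rfl expand, Finset.sum_add_distrib, smul_add]
    have EqB : (n.choose l : ℂ) • ∑ i : Fin N, X (Sum.inl (i,l)) * ρ x k (X (Sum.inr (i, n-l)))
        = (if l + k ≤ n then B l else 0) := by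
      by_cases hc : l + k ≤ n
      · rw [if_pos hc]
        have hkn : k ≤ n - l := by omega
        have : ∀ i ∈ Finset.univ (α := Fin N),
            X (Sum.inl (i,l)) * ρ x k (X (Sum.inr (i, n-l)))
              = ∑ i' : Fin N, (((n-l).factorial / (n-l-k).factorial : ℕ) * x i i')
                  • (X (Sum.inl (i,l)) * X (Sum.inr (i', n-l-k))) := by
          intro i _
          rw [hZ x hx k i (n-l) hkn, Finset.smul_sum, Finset.mul_sum]
          refine Finset.sum_congr rfl fun i' _ => ?_
          rw [smul_smul, mul_smul_comm]
        rw [Finset.sum_congr rfl this, hB]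
        simp only [Finset.smul_sum, smul_smul, Nat.cast_mul]
        refine Finset.sum_congr rfl fun i _ => Finset.sum_congr rfl fun i' _ => ?_
        congr 1
        ring
      · rw [if_neg hc]
        have : ∀ i ∈ Finset.univ (α := Fin N),
            X (Sum.inl (i,l)) * ρ x k (X (Sum.inr (i, n-l))) = 0 := by
          intro i _
          rw [hZ' x hx k i (n-l) (by omega), mul_zero]
        rw [Finset.sum_congr rfl this, Finset.sum_const_zero, smul_zero]
    have EqA : (n.choose l : ℂ) • ∑ i : Fin N, X (Sum.inr (i, n-l)) * ρ x k (X (Sum.inl (i,l)))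
        = (if k ≤ l then A l else 0) := by
      by_cases hc : k ≤ l
      · rw [if_pos hc]
        have : ∀ i ∈ Finset.univ (α := Fin N),
            X (Sum.inr (i, n-l)) * ρ x k (X (Sum.inl (i,l)))
              = ∑ i' : Fin N, (-(((l.factorial / (l-k).factorial : ℕ) : ℂ) * x i' i))
                  • (X (Sum.inl (i', l-k)) * X (Sum.inr (i, n-l))) := by
          intro i _
          rw [hY x hx k i l hc, mul_neg, Finset.smul_sum, Finset.mul_sum, neg_eq_iff_eq_neg,
            ← Finset.sum_neg_distrib]
          refine Finset.sum_congr rfl fun i' _ => ?_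
          rw [smul_smul, mul_smul_comm, neg_smul, neg_neg, mul_comm (X (Sum.inl (i', l-k)))]
        rw [Finset.sum_congr rfl this, hA]
        simp only [Finset.smul_sum, Nat.cast_mul, neg_smul, ← Finset.sum_neg_distrib]
        refine Finset.sum_congr rfl fun i _ => Finset.sum_congr rfl fun i' _ => ?_
        module
      · rw [if_neg hc]
        have : ∀ i ∈ Finset.univ (α := Fin N),
            X (Sum.inr (i, n-l)) * ρ x k (X (Sum.inl (i,l))) = 0 := by
          intro i _
          rw [hY' x hx k i l (by omega), mul_zero]
        rw [Finset.sum_congr rfl this, Finset.sum_const_zero, smul_zero]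
    rw [EqA, EqB, add_comm]
  rw [Finset.sum_congr rfl step, Finset.sum_add_distrib]
  by_cases hkn : k ≤ n
  · have s1 : ∑ l ∈ Finset.range (n+1), (if k ≤ l then A l else 0)
        = ∑ m ∈ Finset.range (n+1-k), A (k+m) := by
      rw [← Finset.sum_Ico_eq_sum_range]
      rw [Finset.range_eq_Ico, ← Finset.sum_Ico_consecutive _ (Nat.zero_le k) (by omega)]
      have z1 : ∑ l ∈ Finset.Ico 0 k, (if k ≤ l then A l else 0) = 0 :=
        Finset.sum_eq_zero fun l hl => if_neg (by simp at hl; omega)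
      have z2 : ∀ l ∈ Finset.Ico k (n+1), (if k ≤ l then A l else 0) = A l := by
        intro l hl; simp at hl; exact if_pos hl.1
      rw [z1, zero_add, Finset.sum_congr rfl z2]
    have s2 : ∑ l ∈ Finset.range (n+1), (if l + k ≤ n then B l else 0)
        = ∑ l ∈ Finset.range (n+1-k), B l := by
      rw [← Finset.sum_subset (Finset.range_subset_range.mpr (by omega : n+1-k ≤ n+1))]
      · exact Finset.sum_congr rfl fun l hl => if_pos (by simp at hl; omega)
      · intro l hl hl'
        exact if_neg (by simp at hl'; omega)
    rw [s1, s2, ← Finset.sum_add_distrib]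
    refine Finset.sum_eq_zero fun m hm => ?_
    have hm' : m + k ≤ n := by simp at hm; omega
    rw [hA, hB]
    simp only
    have e1 : k + m - k = m := by omega
    have e2 : n - (k+m) = n - m - k := by omega
    have hc : ((n.choose (k+m) * ((k+m).factorial / m.factorial) : ℕ) : ℂ)
        = ((n.choose m * ((n-m).factorial / (n-m-k).factorial) : ℕ) : ℂ) := by
      have h := nat_coeff_eq n k m hm'
      rw [add_comm k m]
      exact_mod_cast congrArg (Nat.cast : ℕ → ℂ) h
    rw [e1, e2, hc, Finset.sum_comm]
    exact neg_add_cancel _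
  · have z1 : ∑ l ∈ Finset.range (n+1), (if k ≤ l then A l else 0) = 0 :=
      Finset.sum_eq_zero fun l hl => if_neg (by simp at hl; omega)
    have z2 : ∑ l ∈ Finset.range (n+1), (if l + k ≤ n then B l else 0) = 0 :=
      Finset.sum_eq_zero fun l hl => if_neg (by omega)
    rw [z1, z2, add_zero]
end
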